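/- arXiv:2107.09263 — 8 statements merged into one kernel-verified Lean document; each statement's English description precedes it below -/
import Mathlib

section
/- If (X,T) is a topological dynamical system with the shadowing property, then the set of IE-pairs satisfies E(X,T) = E(X,T)⁺, i.e., the IE-pair relation is transitive: if (a₁,a₂) and (a₂,a₃) are IE-pairs, then (a₁,a₃) is an IE-pair. -/
open scoped Classical

/-- The lower density of a set `I ⊆ ℕ`. -/
noncomputable def lowerDensity (I : Set ℕ) : ℝ :=
  Filter.liminf (fun n => (((Finset.range n).filter (fun k => k ∈ I)).card : ℝ) / n)
    Filter.atTop

/-- `I ⊆ ℕ` is an independence set for the pair `(A₁, A₂)`: for every finite `J ⊆ I` and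
every choice `f` of one of the two sets for each index, `⋂_{j ∈ J} T^{-j}(A_{f j}) ≠ ∅`. -/
def IsIndepSet {X : Type*} (T : X → X) (A₁ A₂ : Set X) (I : Set ℕ) : Prop :=
  ∀ J : Finset ℕ, ↑J ⊆ I → ∀ f : ℕ → Bool,
    ∃ x : X, ∀ j ∈ J, T^[j] x ∈ (if f j then A₁ else A₂)

/-- `(x₁, x₂)` is an IE-pair of `(X, T)`: every pair of open neighborhoods admits an
independence set of positive lower density. -/
def IEPair {X : Type*} [TopologicalSpace X] (T : X → X) (p : X × X) : Prop :=
  ∀ A₁ A₂ : Set X, IsOpen A₁ → IsOpen A₂ → p.1 ∈ A₁ → p.2 ∈ A₂ →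
    ∃ I : Set ℕ, IsIndepSet T A₁ A₂ I ∧ 0 < lowerDensity I

/-- The transitive closure `F⁺`. -/
def plusSet {Z : Type*} (F : Set (Z × Z)) : Set (Z × Z) :=
  {p | Relation.TransGen (fun u v => (u, v) ∈ F) p.1 p.2}

/-- The shadowing property. -/
def HasShadowing {X : Type*} [MetricSpace X] (T : X → X) : Prop :=
  ∀ ε > (0 : ℝ), ∃ δ > (0 : ℝ), ∀ x : ℕ → X,
    (∀ n, dist (T (x n)) (x (n + 1)) ≤ δ) →
    ∃ y : X, ∀ n, dist (x n) (T^[n] y) ≤ ε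

/-!
Two elements `n₁ < n₂` of an independence set for small neighbourhoods of `(a, b)` already give,
for all `s, t ∈ {a, b}`, an orbit segment of length `n₂ - n₁` from near `s` to near `t`; by
continuity of `T` at `a` and `b` this becomes a `δ`-chain from `s` to `t`. Chaining through `b`
yields `δ`-chains of one common length `N` between any two of `a, c`. Concatenating them along an
arbitrary word gives `δ`-pseudo-orbits that are at `a` or `c` as prescribed at the times `N * j`,
and shadowing turns these into true orbits. So the multiples of `N`, a set of lower density
`1 / N`, form an independence set for any neighbourhoods of `(a, c)`.
-/

open Filter Finset Function Metric Topology

section Density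

lemma Set.Finite.lowerDensity_eq_zero {I : Set ℕ} (hI : I.Finite) : lowerDensity I = 0 := by
  refine (squeeze_zero (fun n => by positivity) (fun n => ?_)
    (tendsto_const_div_atTop_nhds_zero_nat (#hI.toFinset : ℝ))).liminf_eq
  gcongr
  exact fun k hk => by simpa using (mem_filter.1 hk).2

lemma le_lowerDensity {I : Set ℕ} {c : ℝ}
    (h : ∀ᶠ n : ℕ in atTop, c * n ≤ #{k ∈ range n | k ∈ I}) : c ≤ lowerDensity I := by
  refine le_liminf_of_le (isBoundedUnder_of ⟨1, fun n => ?_⟩).isCoboundedUnder_ge ?_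
  · exact div_le_one_of_le₀ (mod_cast (card_filter_le _ _).trans (card_range n).le) n.cast_nonneg
  · filter_upwards [h, eventually_gt_atTop 0] with n hn hn₀
    rwa [le_div_iff₀ (mod_cast hn₀)]

lemma lowerDensity_setOf_dvd_pos {N : ℕ} (hN : 0 < N) : 0 < lowerDensity {n | N ∣ n} := by
  refine (by positivity : (0 : ℝ) < 1 / N).trans_le (le_lowerDensity (.of_forall fun n => ?_))
  calc 1 / (N : ℝ) * n = n / N := by ring
    _ ≤ ⌈(n : ℝ) / N⌉₊ := Nat.le_ceil _
    _ = #(range ⌈(n : ℝ) / N⌉₊) := by rw [card_range]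
    _ ≤ _ := by
      refine mod_cast card_le_card_of_injOn (N * ·) (fun j hj => ?_)
        (mul_right_injective₀ hN.ne').injOn
      have hj : (j : ℝ) * N < n :=
        (lt_div_iff₀ (mod_cast hN)).1 (Nat.lt_ceil.1 (mem_range.1 hj))
      simpa [mul_comm] using (mod_cast hj : j * N < n)

end Density

section PseudoChain

variable {X : Type*} [PseudoMetricSpace X]

def PseudoChain (T : X → X) (δ : ℝ) (n : ℕ) (u v : X) : Prop :=
  ∃ c : ℕ → X, c 0 = u ∧ c n = v ∧ ∀ i < n, dist (T (c i)) (c (i + 1)) ≤ δ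

variable {T : X → X} {δ ε : ℝ} {m n : ℕ} {u v w : X}

lemma pseudoChain_iterate (x : X) (n : ℕ) : PseudoChain T 0 n x (T^[n] x) :=
  ⟨fun i => T^[i] x, rfl, rfl, fun i _ => by rw [← iterate_succ_apply' T, dist_self]⟩

lemma PseudoChain.mono (h : PseudoChain T δ n u v) (hδε : δ ≤ ε) : PseudoChain T ε n u v :=
  let ⟨c, h₀, hn, hc⟩ := h
  ⟨c, h₀, hn, fun i hi => (hc i hi).trans hδε⟩

lemma PseudoChain.trans (h₁ : PseudoChain T δ m u v) (h₂ : PseudoChain T δ n v w) :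
    PseudoChain T δ (m + n) u w := by
  obtain ⟨c₁, hc₁0, hc₁m, hc₁⟩ := h₁
  obtain ⟨c₂, hc₂0, hc₂n, hc₂⟩ := h₂
  set c := fun i => if i ≤ m then c₁ i else c₂ (i - m)
  have hc_of_ge : ∀ i, m ≤ i → c i = c₂ (i - m) := by
    intro i hi
    rcases hi.eq_or_lt with rfl | hi
    · simp [c, hc₁m, hc₂0]
    · simp [c, hi.not_ge]
  refine ⟨c, by simp [c, hc₁0], by rw [hc_of_ge _ (by omega), Nat.add_sub_cancel_left, hc₂n],
    fun i hi => ?_⟩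
  rcases lt_or_ge i m with hi' | hi'
  · simpa [c, hi'.le, Nat.succ_le_of_lt hi'] using hc₁ i hi'
  · rw [hc_of_ge i hi', hc_of_ge (i + 1) (by omega), Nat.sub_add_comm hi']
    exact hc₂ _ (by omega)

lemma PseudoChain.perturb_target (h : PseudoChain T δ n u v) (hn : 0 < n) (hv : dist v w ≤ ε) :
    PseudoChain T (δ + ε) n u w := by
  obtain ⟨c, hc0, hcn, hc⟩ := h
  refine ⟨update c n w, by simp [hn.ne, hc0], by simp, fun i hi => ?_⟩
  rw [update_of_ne hi.ne]
  rcases eq_or_ne (i + 1) n with rfl | hi'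
  · calc dist (T (c i)) (update c (i + 1) w (i + 1)) ≤ dist (T (c i)) v + dist v w := by
          rw [update_self, ← hcn]; exact dist_triangle _ _ _
      _ ≤ δ + ε := add_le_add (hcn ▸ hc i hi) hv
  · rw [update_of_ne hi']
    linarith [hc i hi, dist_nonneg.trans hv]

lemma PseudoChain.perturb_source (h : PseudoChain T δ n u v) (hn : 0 < n)
    (hu : dist (T w) (T u) ≤ ε) : PseudoChain T (δ + ε) n w v := by
  obtain ⟨c, hc0, hcn, hc⟩ := h
  refine ⟨update c 0 w, by simp, by simp [hn.ne', hcn], fun i hi => ?_⟩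
  rw [update_of_ne i.succ_ne_zero]
  rcases eq_or_ne i 0 with rfl | hi'
  · calc dist (T (update c 0 w 0)) (c 1) ≤ dist (T w) (T u) + dist (T u) (c 1) := by
          rw [update_self]; exact dist_triangle _ _ _
      _ ≤ δ + ε := by linarith [hc0 ▸ hc 0 hi]
  · rw [update_of_ne hi']
    linarith [hc i hi, dist_nonneg.trans hu]

lemma exists_pseudoOrbit_of_pseudoChain {N : ℕ} (hN : 0 < N) {x : ℕ → X}
    (h : ∀ j, PseudoChain T δ N (x j) (x (j + 1))) :
    ∃ y : ℕ → X, (∀ j, y (N * j) = x j) ∧ ∀ k, dist (T (y k)) (y (k + 1)) ≤ δ := by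
  choose c hc0 hcN hc using h
  set y := fun k => c (k / N) (k % N)
  have hy : ∀ j r, r ≤ N → y (N * j + r) = c j r := by
    intro j r hr
    rcases hr.lt_or_eq with hr | rfl
    · simp [y, Nat.mul_add_div hN, Nat.mod_eq_of_lt hr, Nat.div_eq_of_lt hr]
    · simp [y, ← Nat.mul_succ, hc0, hcN, Nat.mul_div_cancel_left _ hN]
  refine ⟨y, fun j => by simpa [hc0] using hy j 0 hN.le, fun k => ?_⟩
  have hk := Nat.mod_lt k hN
  rw [← Nat.div_add_mod k N, hy _ _ hk.le, add_assoc, hy _ _ hk]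
  exact hc _ _ hk

end PseudoChain

lemma HasShadowing.exists_isIndepSet_setOf_dvd {X : Type*} [MetricSpace X] {T : X → X}
    (hT : HasShadowing T) {U V : Set X} {u v : X} (hU : U ∈ 𝓝 u) (hV : V ∈ 𝓝 v) :
    ∃ δ > 0, ∀ N, 0 < N →
      (∀ s t : Bool, PseudoChain T δ N (if s then u else v) (if t then u else v)) →
      IsIndepSet T U V {n | N ∣ n} := by
  obtain ⟨εU, hεU, hU⟩ := nhds_basis_closedBall.mem_iff.1 hU
  obtain ⟨εV, hεV, hV⟩ := nhds_basis_closedBall.mem_iff.1 hV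
  obtain ⟨δ, hδ, hshadow⟩ := hT (min εU εV) (lt_min hεU hεV)
  refine ⟨δ, hδ, fun N hN hchain J hJ f => ?_⟩
  obtain ⟨x, hx, hstep⟩ := exists_pseudoOrbit_of_pseudoChain hN
    (x := fun j => if f (N * j) then u else v) fun j => hchain _ _
  obtain ⟨y, hy⟩ := hshadow x hstep
  refine ⟨y, fun k hk => ?_⟩
  obtain ⟨j, rfl⟩ := hJ hk
  have hyj := hx j ▸ hy (N * j)
  split_ifs at hyj ⊢
  · exact hU (closedBall_subset_closedBall (min_le_left _ _) (mem_closedBall'.2 hyj))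
  · exact hV (closedBall_subset_closedBall (min_le_right _ _) (mem_closedBall'.2 hyj))

lemma IEPair.exists_pseudoChain {X : Type*} [PseudoMetricSpace X] {T : X → X} {a b : X}
    (hab : IEPair T (a, b)) (ha : ContinuousAt T a) (hb : ContinuousAt T b) {δ : ℝ}
    (hδ : 0 < δ) :
    ∃ p > 0, ∀ s t : Bool, PseudoChain T δ p (if s then a else b) (if t then a else b) := by
  set A : X → Set X := fun z => interior {w | dist w z ≤ δ / 2 ∧ dist (T w) (T z) ≤ δ / 2}
  have hA : ∀ z, ContinuousAt T z → z ∈ A z := fun z hz => mem_interior_iff_mem_nhds.2 <|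
    inter_mem (closedBall_mem_nhds z (by positivity)) (hz (closedBall_mem_nhds _ (by positivity)))
  obtain ⟨I, hI, hIpos⟩ := hab (A a) (A b) isOpen_interior isOpen_interior (hA a ha) (hA b hb)
  have hInf : I.Infinite := fun hfin => hIpos.ne' hfin.lowerDensity_eq_zero
  obtain ⟨n₁, hn₁, n₂, hn₂, hlt⟩ := hInf.nontrivial.exists_lt
  refine ⟨n₂ - n₁, by omega, fun s t => ?_⟩
  obtain ⟨x, hx⟩ := hI {n₁, n₂} (by simp [Set.insert_subset_iff, hn₁, hn₂])
    (fun j => if j = n₁ then s else t)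
  have hx₁ : T^[n₁] x ∈ A (if s then a else b) := by
    simpa [← apply_ite A] using hx n₁ (by simp)
  have hx₂ : T^[n₂] x ∈ A (if t then a else b) := by
    simpa [hlt.ne', ← apply_ite A] using hx n₂ (by simp)
  have horbit : PseudoChain T 0 (n₂ - n₁) (T^[n₁] x) (T^[n₂] x) := by
    simpa only [← iterate_add_apply, Nat.sub_add_cancel hlt.le] using
      pseudoChain_iterate (T := T) (T^[n₁] x) (n₂ - n₁)
  have hclose₁ := interior_subset hx₁
  have hclose₂ := interior_subset hx₂
  exact ((horbit.perturb_target (by omega) hclose₂.1).perturb_source (by omega)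
    ((dist_comm _ _).trans_le hclose₁.2)).mono (by linarith)

theorem IEPair.trans {X : Type*} [MetricSpace X] {T : X → X} (hT : Continuous T)
    (hshad : HasShadowing T) {a b c : X} (hab : IEPair T (a, b)) (hbc : IEPair T (b, c)) :
    IEPair T (a, c) := by
  intro U V hU hV ha hc
  obtain ⟨δ, hδ, hind⟩ := hshad.exists_isIndepSet_setOf_dvd (hU.mem_nhds ha) (hV.mem_nhds hc)
  obtain ⟨p, hp, chain_ab⟩ := hab.exists_pseudoChain hT.continuousAt hT.continuousAt hδ
  obtain ⟨q, hq, chain_bc⟩ := hbc.exists_pseudoChain hT.continuousAt hT.continuousAt hδ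
  have to_b : ∀ s : Bool, PseudoChain T δ (p + q) (if s then a else c) b := by
    rintro (_ | _)
    · simpa [add_comm p] using (chain_bc false true).trans (chain_ab false false)
    · simpa using (chain_ab true false).trans (chain_bc true true)
  have of_b : ∀ t : Bool, PseudoChain T δ (p + q) b (if t then a else c) := by
    rintro (_ | _)
    · simpa using (chain_ab false false).trans (chain_bc true false)
    · simpa [add_comm p] using (chain_bc true true).trans (chain_ab false true)
  exact ⟨_, hind _ (by omega) fun s t => (to_b s).trans (of_b t),
    lowerDensity_setOf_dvd_pos (by omega)⟩

theorem stmt2_general {X : Type*} [MetricSpace X] (T : X → X)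
    (hT : Continuous T) (hshad : HasShadowing T) :
    {p : X × X | IEPair T p} = plusSet {p : X × X | IEPair T p} := by
  have : IsTrans X fun u v => (u, v) ∈ {p : X × X | IEPair T p} :=
    ⟨fun _ _ _ h₁ h₂ => IEPair.trans hT hshad h₁ h₂⟩
  ext ⟨x, y⟩
  change _ ↔ Relation.TransGen _ x y
  rw [Relation.transGen_eq_self]

/-- If a TDS `(X,T)` has the shadowing property, then `E(X,T) = E(X,T)⁺`; in particular the
IE-pair relation is transitive. -/
theorem stmt2 {X : Type*} [MetricSpace X] [CompactSpace X] (T : X → X)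
    (hT : Continuous T) (hshad : HasShadowing T) :
    {p : X × X | IEPair T p} = plusSet {p : X × X | IEPair T p} :=
  stmt2_general T hT hshad
end

section
/- For a compact metric space X, the set of continuous maps T : X → X with the shadowing property is a Borel subset of the Polish space C(X,X) with the uniform topology. -/
open MeasureTheory

section Aux

variable {X : Type*} [MetricSpace X] [CompactSpace X]

/-- Uniform continuity of the first `N` iterates, simultaneously. -/
lemma iter_uc (f : C(X, X)) {ε : ℝ} (hε : 0 < ε) (N : ℕ) :
    ∃ η > (0 : ℝ), ∀ y y' : X, dist y y' < η → ∀ n ≤ N, dist (f^[n] y) (f^[n] y') ≤ ε := by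
  induction N with
  | zero =>
    exact ⟨ε, hε, fun y y' h n hn => by
      interval_cases n; simpa using h.le⟩
  | succ N ih =>
    obtain ⟨η, hη, hh⟩ := ih
    have hcont : UniformContinuous f^[N + 1] :=
      CompactSpace.uniformContinuous_of_continuous (f.continuous.iterate (N + 1))
    obtain ⟨η', hη', hh'⟩ := Metric.uniformContinuous_iff.mp hcont ε hε
    refine ⟨min η η', lt_min hη hη', fun y y' h n hn => ?_⟩
    rcases Nat.lt_succ_iff_lt_or_eq.mp (Nat.lt_succ_of_le hn) with hn' | hn'
    · exact hh y y' (h.trans_le (min_le_left _ _)) n (Nat.lt_succ_iff.mp hn')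
    · subst hn'
      exact (hh' (h.trans_le (min_le_right _ _))).le

/-- Compactness: if every finite initial segment is shadowed, the whole orbit is shadowed. -/
lemma limit_shadow (f : C(X, X)) (x : ℕ → X) (ε : ℝ)
    (h : ∀ k : ℕ, ∃ y : X, ∀ n ≤ k, dist (x n) (f^[n] y) ≤ ε) :
    ∃ y : X, ∀ n, dist (x n) (f^[n] y) ≤ ε := by
  choose y hy using h
  obtain ⟨z, -, φ, hφ, hlim⟩ :=
    isCompact_univ.tendsto_subseq (x := y) (fun n => Set.mem_univ _)
  refine ⟨z, fun n => ?_⟩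
  have hcont : Filter.Tendsto (fun k => dist (x n) (f^[n] (y (φ k)))) Filter.atTop
      (nhds (dist (x n) (f^[n] z))) :=
    ((continuous_const.dist ((f.continuous.iterate n))).tendsto z).comp hlim
  refine le_of_tendsto hcont (Filter.eventually_atTop.mpr ⟨n, fun k hk => ?_⟩)
  exact hy (φ k) n (hk.trans hφ.le_apply)

/-- The countable Borel-friendly reformulation of shadowing. -/
lemma shadowing_iff (d : ℕ → X) (hd : DenseRange d) (f : C(X, X)) :
    HasShadowing ⇑f ↔ ∀ i : ℕ, ∃ j : ℕ, ∀ l : List ℕ,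
      (∀ n, n + 2 ≤ l.length →
        dist (f (d (l.getD n 0))) (d (l.getD (n + 1) 0)) ≤ 1 / ((j : ℝ) + 1)) →
      ∃ m : ℕ, ∀ n < l.length, dist (d (l.getD n 0)) (f^[n] (d m)) ≤ 1 / ((i : ℝ) + 1) := by
  constructor
  · intro hs i
    set ε : ℝ := 1 / ((i : ℝ) + 1) with hεdef
    have hε : 0 < ε := by positivity
    obtain ⟨δ, hδ, hδs⟩ := hs (ε / 2) (by positivity)
    obtain ⟨j, hj⟩ := exists_nat_one_div_lt hδ
    refine ⟨j, fun l hpo => ?_⟩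
    rcases Nat.eq_zero_or_pos l.length with hl | hl
    · exact ⟨0, fun n hn => by omega⟩
    set k := l.length with hk
    set x : ℕ → X := fun n =>
      if n < k then d (l.getD n 0) else f^[n + 1 - k] (d (l.getD (k - 1) 0)) with hxdef
    have hxpo : ∀ n, dist (f (x n)) (x (n + 1)) ≤ δ := by
      intro n
      rcases lt_trichotomy (n + 1) k with h1 | h1 | h1
      · have hx1 : x n = d (l.getD n 0) := by simp [hxdef, (by omega : n < k)]
        have hx2 : x (n + 1) = d (l.getD (n + 1) 0) := by simp [hxdef, h1]
        rw [hx1, hx2]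
        exact (hpo n (by omega)).trans hj.le
      · have hx1 : x n = d (l.getD (k - 1) 0) := by
          have : n = k - 1 := by omega
          simp [hxdef, (by omega : n < k), this, hl.ne']
        have hx2 : x (n + 1) = f (d (l.getD (k - 1) 0)) := by
          have h2 : ¬ (n + 1 < k) := by omega
          have h3 : n + 1 + 1 - k = 1 := by omega
          simp [hxdef, h2, h3]
        rw [hx1, hx2]
        simp [hδ.le]
      · have h2 : ¬ (n < k) := by omega
        have h3 : ¬ (n + 1 < k) := by omega
        have h4 : n + 1 + 1 - k = (n + 1 - k) + 1 := by omega
        have hx1 : x n = f^[n + 1 - k] (d (l.getD (k - 1) 0)) := by simp [hxdef, h2]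
        have hx2 : x (n + 1) = f (f^[n + 1 - k] (d (l.getD (k - 1) 0))) := by
          simp [hxdef, h3, h4, Function.iterate_succ_apply']
        rw [hx1, hx2]
        simp [hδ.le]
    obtain ⟨y, hy⟩ := hδs x hxpo
    obtain ⟨η, hη, hηs⟩ := iter_uc f (show (0:ℝ) < ε / 2 by positivity) k
    obtain ⟨m, hm⟩ := Metric.denseRange_iff.mp hd y η hη
    refine ⟨m, fun n hn => ?_⟩
    have h1 : dist (d (l.getD n 0)) (f^[n] y) ≤ ε / 2 := by
      simpa [hxdef, hn] using hy n
    have h2 : dist (f^[n] y) (f^[n] (d m)) ≤ ε / 2 := hηs y (d m) hm n (by omega)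
    calc dist (d (l.getD n 0)) (f^[n] (d m))
        ≤ dist (d (l.getD n 0)) (f^[n] y) + dist (f^[n] y) (f^[n] (d m)) := dist_triangle _ _ _
      _ ≤ ε / 2 + ε / 2 := add_le_add h1 h2
      _ = ε := by ring
  · intro h ε hε
    obtain ⟨i, hi⟩ := exists_nat_one_div_lt (show (0:ℝ) < ε / 3 by linarith)
    obtain ⟨j, hj⟩ := h i
    set δ' : ℝ := 1 / ((j : ℝ) + 1) with hδ'def
    have hδ' : 0 < δ' := by positivity
    obtain ⟨η, hη, hηf⟩ := Metric.uniformContinuous_iff.mp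
      (CompactSpace.uniformContinuous_of_continuous f.continuous)
      (δ' / 3) (by positivity)
    refine ⟨δ' / 3, by positivity, fun x hx => ?_⟩
    apply limit_shadow
    intro k
    set ρ : ℝ := min η (min (δ' / 3) (ε / 3)) with hρdef
    have hρ : 0 < ρ := by
      apply lt_min hη; apply lt_min <;> [positivity; linarith]
    have ha : ∀ n : ℕ, ∃ m : ℕ, dist (x n) (d m) < ρ :=
      fun n => Metric.denseRange_iff.mp hd (x n) ρ hρ
    choose a hadist using ha
    set l : List ℕ := (List.range (k + 1)).map a with hldef
    have hlen : l.length = k + 1 := by simp [hldef]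
    have hget : ∀ n < k + 1, l.getD n 0 = a n := by
      intro n hn
      rw [List.getD_eq_getElem _ _ (by omega : n < l.length)]
      simp [hldef]
    have hpo : ∀ n, n + 2 ≤ l.length →
        dist (f (d (l.getD n 0))) (d (l.getD (n + 1) 0)) ≤ δ' := by
      intro n hn
      rw [hlen] at hn
      rw [hget n (by omega), hget (n + 1) (by omega)]
      have h1 : dist (f (d (a n))) (f (x n)) < δ' / 3 := by
        apply hηf
        rw [dist_comm]
        exact (hadist n).trans_le ((min_le_left _ _))
      have h2 : dist (f (x n)) (x (n + 1)) ≤ δ' / 3 := hx n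
      have h3 : dist (x (n + 1)) (d (a (n + 1))) < δ' / 3 :=
        (hadist (n + 1)).trans_le ((min_le_right _ _).trans (min_le_left _ _))
      calc dist (f (d (a n))) (d (a (n + 1)))
          ≤ dist (f (d (a n))) (f (x n)) + dist (f (x n)) (x (n + 1))
            + dist (x (n + 1)) (d (a (n + 1))) := dist_triangle4 _ _ _ _
        _ ≤ δ' / 3 + δ' / 3 + δ' / 3 := by linarith
        _ = δ' := by ring
    obtain ⟨m, hm⟩ := hj l hpo
    refine ⟨d m, fun n hn => ?_⟩
    have h1 : dist (d (a n)) (f^[n] (d m)) ≤ 1 / ((i : ℝ) + 1) := by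
      have := hm n (by omega : n < l.length)
      rwa [hget n (by omega)] at this
    have h2 : dist (x n) (d (a n)) < ρ := hadist n
    have h3 : ρ ≤ ε / 3 := (min_le_right _ _).trans (min_le_right _ _)
    calc dist (x n) (f^[n] (d m))
        ≤ dist (x n) (d (a n)) + dist (d (a n)) (f^[n] (d m)) := dist_triangle _ _ _
      _ ≤ ε / 3 + ε / 3 := by linarith
      _ ≤ ε := by linarith

lemma continuous_iter_apply (y : X) (n : ℕ) :
    Continuous fun f : C(X, X) => f^[n] y := by
  induction n with
  | zero => simpa using continuous_const
  | succ n ih =>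
    simp only [Function.iterate_succ_apply']
    exact ContinuousEval.continuous_eval.comp (continuous_id.prodMk ih)

end Aux

/-- For a compact metric space `X`, the set of continuous self-maps with the shadowing
property is a Borel subset of `C(X,X)` with the uniform topology. -/
theorem stmt4 {X : Type*} [MetricSpace X] [CompactSpace X] :
    MeasurableSet[borel C(X, X)] {f : C(X, X) | HasShadowing ⇑f} := by
  letI : MeasurableSpace C(X, X) := borel C(X, X)
  haveI : BorelSpace C(X, X) := ⟨rfl⟩
  show MeasurableSet {f : C(X, X) | HasShadowing ⇑f}
  rcases isEmpty_or_nonempty X with hX | hX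
  · have : {f : C(X, X) | HasShadowing ⇑f} = Set.univ := by
      ext f
      simp only [Set.mem_setOf_eq, Set.mem_univ, iff_true]
      exact fun ε hε => ⟨1, one_pos, fun x _ => (IsEmpty.false (x 0)).elim⟩
    rw [this]; exact MeasurableSet.univ
  · obtain ⟨d, hd⟩ := TopologicalSpace.exists_dense_seq X
    have hset : {f : C(X, X) | HasShadowing ⇑f} =
        ⋂ i : ℕ, ⋃ j : ℕ, ⋂ l : List ℕ,
          ({f : C(X, X) | ∀ n, n + 2 ≤ l.length →
              dist (f (d (l.getD n 0))) (d (l.getD (n + 1) 0)) ≤ 1 / ((j : ℝ) + 1)}ᶜ ∪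
            ⋃ m : ℕ, {f : C(X, X) |
              ∀ n < l.length, dist (d (l.getD n 0)) (f^[n] (d m)) ≤ 1 / ((i : ℝ) + 1)}) := by
      ext f
      rw [Set.mem_setOf_eq, shadowing_iff d hd f]
      simp only [Set.mem_iInter, Set.mem_iUnion, Set.mem_union, Set.mem_compl_iff,
        Set.mem_setOf_eq]
      refine forall_congr' fun i => exists_congr fun j => forall_congr' fun l => ?_
      exact imp_iff_not_or
    rw [hset]
    refine MeasurableSet.iInter fun i => MeasurableSet.iUnion fun j =>
      MeasurableSet.iInter fun l => MeasurableSet.union ?_ (MeasurableSet.iUnion fun m => ?_)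
    · apply MeasurableSet.compl
      rw [Set.setOf_forall]
      refine MeasurableSet.iInter fun n => ?_
      by_cases hn : n + 2 ≤ l.length
      · simp only [hn, forall_true_left]
        exact (isClosed_le
          ((Continuous.dist ((ContinuousEvalConst.continuous_eval_const _))
            continuous_const)) continuous_const).measurableSet
      · have : {f : C(X, X) | n + 2 ≤ l.length →
            dist (f (d (l.getD n 0))) (d (l.getD (n + 1) 0)) ≤ 1 / ((j : ℝ) + 1)} =
            Set.univ := by
          ext f; simp [hn]
        rw [this]; exact MeasurableSet.univ
    · rw [Set.setOf_forall]
      refine MeasurableSet.iInter fun n => ?_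
      by_cases hn : n < l.length
      · simp only [hn, forall_true_left]
        exact (isClosed_le
          (Continuous.dist continuous_const (continuous_iter_apply (d m) n))
          continuous_const).measurableSet
      · have : {f : C(X, X) | n < l.length →
            dist (d (l.getD n 0)) (f^[n] (d m)) ≤ 1 / ((i : ℝ) + 1)} = Set.univ := by
          ext f; simp [hn]
        rw [this]; exact MeasurableSet.univ
end

section
/- For a compact metric space X, the set of topologically mixing continuous maps T : X → X is a Borel subset of C(X,X) with the uniform topology. -/
open MeasureTheory

/-- A map `T` is topologically mixing if for every pair of nonempty open sets `U, V` there
exists `N` such that `T^{-n}(U) ∩ V ≠ ∅` for every `n ≥ N`. -/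
def Mixing {X : Type*} [TopologicalSpace X] (T : X → X) : Prop :=
  ∀ U V : Set X, IsOpen U → IsOpen V → U.Nonempty → V.Nonempty →
    ∃ N : ℕ, ∀ n ≥ N, (T^[n] ⁻¹' U ∩ V).Nonempty

open TopologicalSpace in
lemma continuous_iterate_apply' {X : Type*} [MetricSpace X] [CompactSpace X]
    (n : ℕ) (x : X) : Continuous fun f : C(X, X) => f^[n] x := by
  induction n with
  | zero => simpa using continuous_const
  | succ n ih =>
    have h : (fun f : C(X, X) => f^[n + 1] x) = fun f : C(X, X) => f (f^[n] x) := by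
      funext f; exact Function.iterate_succ_apply' f n x
    rw [h]
    exact ContinuousEval.continuous_eval.comp (continuous_id.prodMk ih)

lemma isOpen_nonempty_set' {X : Type*} [MetricSpace X] [CompactSpace X]
    (U V : Set X) (hU : IsOpen U) (n : ℕ) :
    IsOpen {f : C(X, X) | ((⇑f)^[n] ⁻¹' U ∩ V).Nonempty} := by
  have h : {f : C(X, X) | ((⇑f)^[n] ⁻¹' U ∩ V).Nonempty}
      = ⋃ x ∈ V, {f : C(X, X) | f^[n] x ∈ U} := by
    ext f
    simp only [Set.mem_setOf_eq, Set.mem_iUnion]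
    constructor
    · rintro ⟨x, hx1, hx2⟩; exact ⟨x, hx2, hx1⟩
    · rintro ⟨x, hx2, hx1⟩; exact ⟨x, hx1, hx2⟩
  rw [h]
  exact isOpen_biUnion fun x _ => hU.preimage (continuous_iterate_apply' n x)

open TopologicalSpace in
/-- For a compact metric space `X`, the set of topologically mixing continuous self-maps is a
Borel subset of `C(X,X)` with the uniform topology. -/
theorem stmt5 {X : Type*} [MetricSpace X] [CompactSpace X] :
    MeasurableSet[borel C(X, X)] {f : C(X, X) | Mixing ⇑f} := by
  let B := countableBasis X
  have hB : IsTopologicalBasis B := isBasis_countableBasis X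
  have hBc : B.Countable := countable_countableBasis X
  have hset : {f : C(X, X) | Mixing ⇑f} =
      ⋂ U ∈ B, ⋂ V ∈ B, {f : C(X, X) | U.Nonempty → V.Nonempty →
        ∃ N : ℕ, ∀ n ≥ N, ((⇑f)^[n] ⁻¹' U ∩ V).Nonempty} := by
    ext f
    simp only [Set.mem_setOf_eq, Set.mem_iInter]
    constructor
    · intro hf U hU V hV hUne hVne
      exact hf U V (isOpen_of_mem_countableBasis hU) (isOpen_of_mem_countableBasis hV) hUne hVne
    · intro hf U V hUo hVo hUne hVne
      obtain ⟨u, hu⟩ := hUne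
      obtain ⟨v, hv⟩ := hVne
      obtain ⟨U', hU'B, huU', hU'⟩ := hB.exists_subset_of_mem_open hu hUo
      obtain ⟨V', hV'B, hvV', hV'⟩ := hB.exists_subset_of_mem_open hv hVo
      obtain ⟨N, hN⟩ := hf U' hU'B V' hV'B ⟨u, huU'⟩ ⟨v, hvV'⟩
      refine ⟨N, fun n hn => ?_⟩
      obtain ⟨x, hx1, hx2⟩ := hN n hn
      exact ⟨x, hU' hx1, hV' hx2⟩
  rw [hset]
  refine MeasurableSet.biInter hBc fun U hU => MeasurableSet.biInter hBc fun V hV => ?_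
  by_cases hUne : U.Nonempty
  · by_cases hVne : V.Nonempty
    · have h2 : {f : C(X, X) | U.Nonempty → V.Nonempty →
          ∃ N : ℕ, ∀ n ≥ N, ((⇑f)^[n] ⁻¹' U ∩ V).Nonempty}
          = ⋃ N : ℕ, ⋂ n : ℕ, ⋂ _ : n ≥ N, {f : C(X, X) | ((⇑f)^[n] ⁻¹' U ∩ V).Nonempty} := by
        ext f
        simp [hUne, hVne]
      rw [h2]
      refine MeasurableSet.iUnion fun N => MeasurableSet.iInter fun n =>
        MeasurableSet.iInter fun _ => ?_
      exact MeasurableSpace.measurableSet_generateFrom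
        (isOpen_nonempty_set' U V (isOpen_of_mem_countableBasis hU) n)
    · have : {f : C(X, X) | U.Nonempty → V.Nonempty →
          ∃ N : ℕ, ∀ n ≥ N, ((⇑f)^[n] ⁻¹' U ∩ V).Nonempty} = Set.univ := by
        ext f; simp [hVne]
      rw [this]; exact MeasurableSet.univ
  · have : {f : C(X, X) | U.Nonempty → V.Nonempty →
        ∃ N : ℕ, ∀ n ≥ N, ((⇑f)^[n] ⁻¹' U ∩ V).Nonempty} = Set.univ := by
      ext f; simp [hUne]
    rw [this]; exact MeasurableSet.univ
end

section
/- For a compact metric space X, the set UPE(X) of continuous maps T : X → X with uniform positive entropy is a Borel subset of C(X,X). -/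
open scoped Classical

open MeasureTheory

/-- `(X,T)` has uniform positive entropy: every pair is an IE-pair. -/
def HasUPE {X : Type*} [TopologicalSpace X] (T : X → X) : Prop :=
  {p : X × X | IEPair T p} = Set.univ

namespace UPEAux

variable {X : Type*}

/-- Finite independence condition, with finsets coding the choice function. -/
def IndS (T : X → X) (A B : Set X) (J : Finset ℕ) : Prop :=
  ∀ S : Finset ℕ, ∃ x : X, ∀ j ∈ J, T^[j] x ∈ (if j ∈ S then A else B)

lemma IndS.shift {T : X → X} {A B : Set X} {J : Finset ℕ} (h : IndS T A B J) (a : ℕ) :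
    IndS T A B ((J.filter (fun j => a ≤ j)).image (fun j => j - a)) := by
  intro S
  obtain ⟨x, hx⟩ := h (S.image (fun s => s + a))
  refine ⟨T^[a] x, ?_⟩
  intro j' hj'
  obtain ⟨j, hj, rfl⟩ := Finset.mem_image.1 hj'
  obtain ⟨hjJ, hja⟩ := Finset.mem_filter.1 hj
  have hiter : T^[j - a] (T^[a] x) = T^[j] x := by
    rw [← Function.iterate_add_apply]
    congr 1
    omega
  rw [hiter]
  have h1 := hx j hjJ
  have hcond : (j ∈ S.image (fun s => s + a)) ↔ (j - a ∈ S) := by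
    simp only [Finset.mem_image]
    constructor
    · rintro ⟨s, hs, rfl⟩; simpa using hs
    · intro hs; exact ⟨j - a, hs, by omega⟩
  by_cases hc : j - a ∈ S
  · rw [if_pos hc]
    rwa [if_pos (hcond.2 hc)] at h1
  · rw [if_neg hc]
    rwa [if_neg (fun hh => hc (hcond.1 hh))] at h1

/-- The shift/argmax combinatorial lemma. -/
lemma exists_good_shift (k M : ℕ) (J : Finset ℕ)
    (hJr : J ⊆ Finset.range M) (hJc : M ≤ (k + 1) * J.card) (hM : 1 ≤ M) :
    ∃ a L : ℕ, a + L = M ∧ M ≤ 2 * (k + 1) * L ∧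
      ∀ m ≤ L, m ≤ 2 * (k + 1) *
        (((J.filter (fun j => a ≤ j)).image (fun j => j - a)).filter (fun j => j < m)).card := by
  set D : ℕ := 2 * (k + 1) with hD
  set g : ℕ → ℤ := fun a => (D : ℤ) * ((J.filter (fun j => a ≤ j)).card : ℤ) - ((M : ℤ) - a)
    with hg
  obtain ⟨a, ha, hamax⟩ := Finset.exists_max_image (Finset.range (M + 1)) g ⟨0, by simp⟩
  have haM : a ≤ M := by have := Finset.mem_range.1 ha; omega
  have hg0 : (M : ℤ) ≤ g 0 := by
    have h0 : J.filter (fun j => 0 ≤ j) = J := Finset.filter_true_of_mem fun _ _ => Nat.zero_le _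
    have hc : (M : ℤ) ≤ ((k : ℤ) + 1) * J.card := by exact_mod_cast hJc
    simp only [hg, h0, hD]
    push_cast
    nlinarith
  have hgM : g M = 0 := by
    have hemp : J.filter (fun j => M ≤ j) = ∅ :=
      Finset.filter_false_of_mem fun j hj => by have := Finset.mem_range.1 (hJr hj); omega
    simp [hg, hemp]
  have hga : g 0 ≤ g a := hamax 0 (by simp)
  have haM' : a < M := by
    rcases lt_or_eq_of_le haM with h | h
    · exact h
    · exfalso
      rw [h, hgM] at hga
      have : (1 : ℤ) ≤ (M : ℤ) := by exact_mod_cast hM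
      linarith
  have hcardle : (J.filter (fun j => a ≤ j)).card ≤ M - a := by
    have hsub : J.filter (fun j => a ≤ j) ⊆ Finset.Ico a M := by
      intro j hj
      obtain ⟨hjJ, hja⟩ := Finset.mem_filter.1 hj
      exact Finset.mem_Ico.2 ⟨hja, Finset.mem_range.1 (hJr hjJ)⟩
    simpa [Nat.card_Ico] using Finset.card_le_card hsub
  refine ⟨a, M - a, by omega, ?_, ?_⟩
  · -- M ≤ D * (M - a)
    have h1 : (M : ℤ) ≤ g a := le_trans hg0 hga
    have h2 : g a ≤ (D : ℤ) * ((M : ℤ) - a) - ((M : ℤ) - a) := by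
      have : ((J.filter (fun j => a ≤ j)).card : ℤ) ≤ (M : ℤ) - a := by
        have := hcardle; push_cast; omega
      simp only [hg]
      nlinarith [this, show (0:ℤ) < (D:ℤ) by positivity]
    have h3 : (M : ℤ) ≤ (D : ℤ) * ((M : ℤ) - a) := by nlinarith [show ((M:ℤ) - a) ≥ 0 by omega]
    have : (M : ℤ) ≤ (D : ℤ) * ((M - a : ℕ) : ℤ) := by
      rwa [Nat.cast_sub haM]
    exact_mod_cast this
  · intro m hm
    set b := a + m with hb
    have hbM : b ≤ M := by omega
    have hgb : g b ≤ g a := hamax b (Finset.mem_range.2 (by omega))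
    -- card split
    have h2 : (J.filter (fun j => a ≤ j)).filter (fun j => ¬ j < b) = J.filter (fun j => b ≤ j) := by
      ext j
      simp only [Finset.mem_filter]
      constructor
      · rintro ⟨⟨h1, _⟩, h3⟩; exact ⟨h1, by omega⟩
      · rintro ⟨h1, h3⟩; exact ⟨⟨h1, by omega⟩, by omega⟩
    have hsplit : (J.filter (fun j => a ≤ j)).card =
        ((J.filter (fun j => a ≤ j)).filter (fun j => j < b)).card
          + (J.filter (fun j => b ≤ j)).card := by
      rw [← h2]
      exact (Finset.card_filter_add_card_filter_not (p := fun j => j < b)).symm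
    -- from g b ≤ g a deduce m ≤ D * middle card
    have key : (m : ℤ) ≤ (D : ℤ) * (((J.filter (fun j => a ≤ j)).filter (fun j => j < b)).card : ℤ) := by
      have e1 : ((J.filter (fun j => a ≤ j)).card : ℤ) =
          (((J.filter (fun j => a ≤ j)).filter (fun j => j < b)).card : ℤ)
            + ((J.filter (fun j => b ≤ j)).card : ℤ) := by exact_mod_cast hsplit
      simp only [hg] at hgb
      have hbma : ((b : ℤ) - a) = (m : ℤ) := by push_cast [hb]; ring
      nlinarith [hgb, e1]
    -- identify the image-filter card
    have himg : (((J.filter (fun j => a ≤ j)).image (fun j => j - a)).filter (fun j => j < m)) =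
        ((J.filter (fun j => a ≤ j)).filter (fun j => j < b)).image (fun j => j - a) := by
      ext j'
      simp only [Finset.mem_filter, Finset.mem_image]
      constructor
      · rintro ⟨⟨j, ⟨hjJ, hja⟩, rfl⟩, hlt⟩
        exact ⟨j, ⟨⟨hjJ, hja⟩, by omega⟩, rfl⟩
      · rintro ⟨j, ⟨⟨hjJ, hja⟩, hjb⟩, rfl⟩
        exact ⟨⟨j, ⟨hjJ, hja⟩, rfl⟩, by omega⟩
    have hcardimg : (((J.filter (fun j => a ≤ j)).filter (fun j => j < b)).image
        (fun j => j - a)).card = ((J.filter (fun j => a ≤ j)).filter (fun j => j < b)).card := by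
      apply Finset.card_image_of_injOn
      intro x hx y hy hxy
      simp only [Finset.coe_filter, Set.mem_setOf_eq, Finset.mem_filter] at hx hy
      dsimp only at hxy
      omega
    rw [himg, hcardimg]
    exact_mod_cast key


lemma indS_of_isIndepSet {T : X → X} {A B : Set X} {I : Set ℕ}
    (h : IsIndepSet T A B I) {J : Finset ℕ} (hJ : ↑J ⊆ I) : IndS T A B J := by
  intro S
  obtain ⟨x, hx⟩ := h J hJ (fun j => decide (j ∈ S))
  refine ⟨x, fun j hj => ?_⟩
  have h1 := hx j hj
  by_cases hc : j ∈ S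
  · rw [if_pos hc]
    rwa [if_pos (by simpa using hc)] at h1
  · rw [if_neg hc]
    rwa [if_neg (by simpa using hc)] at h1

/-- The countable (Borel-friendly) characterization of the existence of an independence set
of positive lower density. -/
lemma good_iff (T : X → X) (A B : Set X) :
    (∃ I : Set ℕ, IsIndepSet T A B I ∧ 0 < lowerDensity I) ↔
    ∃ k : ℕ, ∀ N : ℕ, ∃ M : ℕ, N ≤ M ∧ ∃ J : Finset ℕ,
      (J ⊆ Finset.range M ∧ M ≤ (k + 1) * J.card) ∧ IndS T A B J := by
  constructor
  · rintro ⟨I, hI, hd⟩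
    have hbdd : Filter.IsBoundedUnder (· ≥ ·) Filter.atTop
        (fun n => (((Finset.range n).filter (fun k => k ∈ I)).card : ℝ) / n) :=
      Filter.isBoundedUnder_of ⟨0, fun n => by positivity⟩
    obtain ⟨k, hk⟩ := exists_nat_one_div_lt hd
    have hev := Filter.eventually_lt_of_lt_liminf (u := fun n =>
      (((Finset.range n).filter (fun k => k ∈ I)).card : ℝ) / n) hk hbdd
    obtain ⟨N₀, hN₀⟩ := Filter.eventually_atTop.1 hev
    refine ⟨k, fun N => ⟨max N (max N₀ 1), le_max_left _ _, (Finset.range (max N (max N₀ 1))).filter (fun i => i ∈ I), ⟨Finset.filter_subset _ _, ?_⟩, indS_of_isIndepSet hI (fun i hi => by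
      simp only [Finset.coe_filter, Set.mem_setOf_eq] at hi; exact hi.2)⟩⟩
    set M := max N (max N₀ 1) with hM
    have hM1 : 1 ≤ M := le_trans (le_max_right N₀ 1) (le_max_right _ _)
    have hMN₀ : N₀ ≤ M := le_trans (le_max_left N₀ 1) (le_max_right _ _)
    have h1 := hN₀ M hMN₀
    have hMpos : (0:ℝ) < M := by exact_mod_cast hM1
    rw [div_lt_div_iff₀ (by positivity) hMpos] at h1
    have h2 : (M : ℝ) < (k + 1) * (((Finset.range M).filter (fun i => i ∈ I)).card : ℝ) := by
      nlinarith
    have h3 : (M : ℕ) < (k + 1) * ((Finset.range M).filter (fun i => i ∈ I)).card := by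
      exact_mod_cast h2
    omega
  · rintro ⟨k, h⟩
    set D : ℕ := 2 * (k + 1) with hD
    have h' : ∀ n : ℕ, ∃ K : Finset ℕ, IndS T A B K ∧
        ∀ m ≤ n, m ≤ D * ((K.filter (fun j => j < m)).card) := by
      intro n
      obtain ⟨M, hMle, J, ⟨hJr, hJc⟩, hInd⟩ := h (D * n + 1)
      obtain ⟨a, L, haL, hML, hbound⟩ := exists_good_shift k M J hJr hJc (by omega)
      refine ⟨(J.filter (fun j => a ≤ j)).image (fun j => j - a), hInd.shift a, ?_⟩
      intro m hm
      apply hbound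
      have hDL : D * n < D * L := lt_of_lt_of_le (Nat.lt_succ_self _) (le_trans hMle hML)
      have hnL : n < L := Nat.lt_of_mul_lt_mul_left hDL
      omega
    choose K hKind hKd using h'
    have : (Filter.atTop : Filter ℕ).NeBot := Filter.atTop_neBot
    set 𝒰 : Ultrafilter ℕ := Ultrafilter.of Filter.atTop with h𝒰
    set I : Set ℕ := {i : ℕ | {n | i ∈ K n} ∈ 𝒰} with hI
    have hIcard : ∀ m : ℕ, m ≤ D * ((Finset.range m).filter (fun i => i ∈ I)).card := by
      intro m
      have h1 : {n | m ≤ n} ∈ (𝒰 : Filter ℕ) := Ultrafilter.of_le Filter.atTop (Filter.mem_atTop m)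
      have h2 : (⋂ i ∈ Finset.range m, {n | i ∈ I ↔ i ∈ K n}) ∈ (𝒰 : Filter ℕ) := by
        rw [Filter.biInter_finset_mem]
        intro i _
        by_cases hi : i ∈ I
        · exact Filter.mem_of_superset hi (fun n hn => iff_of_true hi hn)
        · have hc : {n | i ∈ K n}ᶜ ∈ 𝒰 := Ultrafilter.compl_mem_iff_notMem.2 hi
          exact Filter.mem_of_superset hc (fun n hn => iff_of_false hi hn)
      obtain ⟨n, hn1, hn2⟩ := Filter.nonempty_of_mem (Filter.inter_mem h1 h2)
      simp only [Set.mem_iInter, Set.mem_setOf_eq] at hn2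
      have heq : (Finset.range m).filter (fun i => i ∈ I) = (K n).filter (fun j => j < m) := by
        ext i
        simp only [Finset.mem_filter, Finset.mem_range]
        constructor
        · rintro ⟨h1', h2'⟩
          exact ⟨(hn2 i (Finset.mem_range.2 h1')).1 h2', h1'⟩
        · rintro ⟨h1', h2'⟩
          exact ⟨h2', (hn2 i (Finset.mem_range.2 h2')).2 h1'⟩
      rw [heq]
      exact hKd n m hn1
    refine ⟨I, ?_, ?_⟩
    · intro J hJ f
      have hmem : (⋂ i ∈ J, {n | i ∈ K n}) ∈ (𝒰 : Filter ℕ) :=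
        (Filter.biInter_finset_mem J).2 (fun i hi => hJ hi)
      obtain ⟨n, hn⟩ := Filter.nonempty_of_mem hmem
      simp only [Set.mem_iInter, Set.mem_setOf_eq] at hn
      obtain ⟨x, hx⟩ := hKind n ((K n).filter (fun j => f j = true))
      refine ⟨x, fun j hj => ?_⟩
      have h1 := hx j (hn j hj)
      by_cases hf : f j = true
      · rw [if_pos hf]
        rwa [if_pos (Finset.mem_filter.2 ⟨hn j hj, hf⟩)] at h1
      · rw [if_neg hf]
        have hnot : j ∉ Finset.filter (fun j => f j = true) (K n) :=
          fun hh => hf (Finset.mem_filter.1 hh).2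
        rwa [if_neg hnot] at h1
    · have hD0 : (0:ℝ) < 1 / (D : ℝ) := by
        have : (0:ℕ) < D := by omega
        positivity
      refine lt_of_lt_of_le hD0 ?_
      unfold lowerDensity
      have hcob : Filter.IsCoboundedUnder (· ≥ ·) Filter.atTop
          (fun n => (((Finset.range n).filter (fun k => k ∈ I)).card : ℝ) / n) := by
        apply Filter.IsBoundedUnder.isCoboundedUnder_ge
        refine Filter.isBoundedUnder_of ⟨1, fun n => ?_⟩
        rcases Nat.eq_zero_or_pos n with hn | hn
        · simp [hn]
        · rw [div_le_one (by exact_mod_cast hn)]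
          have := Finset.card_filter_le (Finset.range n) (fun i => i ∈ I)
          simp only [Finset.card_range] at this
          exact_mod_cast this
      apply Filter.le_liminf_of_le hcob
      filter_upwards [Filter.eventually_ge_atTop 1] with n hn
      have hnpos : (0:ℝ) < n := by exact_mod_cast hn
      have hDpos : (0:ℝ) < (D:ℝ) := by
        have : (0:ℕ) < D := by omega
        exact_mod_cast this
      rw [div_le_div_iff₀ hDpos hnpos]
      have := hIcard n
      have : (n:ℝ) ≤ (D:ℝ) * (((Finset.range n).filter (fun i => i ∈ I)).card : ℝ) := by
        exact_mod_cast this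
      linarith



open TopologicalSpace

variable {X : Type*}

lemma isIndepSet_mono {T : X → X} {A B A' B' : Set X} (hA : A ⊆ A') (hB : B ⊆ B')
    {I : Set ℕ} (h : IsIndepSet T A B I) : IsIndepSet T A' B' I := by
  intro J hJ f
  obtain ⟨x, hx⟩ := h J hJ f
  refine ⟨x, fun j hj => ?_⟩
  have h1 := hx j hj
  by_cases hf : f j = true
  · rw [if_pos hf] at h1 ⊢; exact hA h1
  · rw [if_neg hf] at h1 ⊢; exact hB h1

lemma hasUPE_iff [TopologicalSpace X] [SecondCountableTopology X] (T : X → X) :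
    HasUPE T ↔ ∀ U ∈ countableBasis X, ∀ V ∈ countableBasis X,
      U.Nonempty → V.Nonempty → ∃ I : Set ℕ, IsIndepSet T U V I ∧ 0 < lowerDensity I := by
  constructor
  · intro h U hU V hV ⟨x, hx⟩ ⟨y, hy⟩
    have hp : IEPair T (x, y) := Set.eq_univ_iff_forall.1 h (x, y)
    exact hp U V (isOpen_of_mem_countableBasis hU) (isOpen_of_mem_countableBasis hV) hx hy
  · intro h
    apply Set.eq_univ_iff_forall.2
    intro p A₁ A₂ h1 h2 hp1 hp2
    obtain ⟨U, hU, hxU, hUA⟩ :=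
      (isBasis_countableBasis X).exists_subset_of_mem_open hp1 h1
    obtain ⟨V, hV, hyV, hVA⟩ :=
      (isBasis_countableBasis X).exists_subset_of_mem_open hp2 h2
    obtain ⟨I, hI, hd⟩ := h U hU V hV ⟨p.1, hxU⟩ ⟨p.2, hyV⟩
    exact ⟨I, isIndepSet_mono hUA hVA hI, hd⟩

lemma continuous_iter_eval [MetricSpace X] [CompactSpace X] (j : ℕ) (x : X) :
    Continuous fun f : C(X, X) => (⇑f)^[j] x := by
  induction j with
  | zero => simpa using continuous_const
  | succ j ih =>
    simp only [Function.iterate_succ_apply']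
    exact ContinuousEval.continuous_eval.comp (continuous_id.prodMk ih)


end UPEAux

/-- For a compact metric space `X`, the set `UPE(X)` of continuous self-maps with uniform
positive entropy is a Borel subset of `C(X,X)`. -/
theorem stmt7 {X : Type*} [MetricSpace X] [CompactSpace X] :
    MeasurableSet[borel C(X, X)] {f : C(X, X) | HasUPE ⇑f} := by
  classical
  have open_meas : ∀ s : Set C(X, X), IsOpen s → MeasurableSet[borel C(X, X)] s :=
    fun s hs => MeasurableSpace.measurableSet_generateFrom hs
  haveI : Countable ↥(TopologicalSpace.countableBasis X) :=
    (TopologicalSpace.countable_countableBasis X).to_subtype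
  have key : {f : C(X, X) | HasUPE ⇑f} =
      ⋂ (U : ↥(TopologicalSpace.countableBasis X)) (V : ↥(TopologicalSpace.countableBasis X))
        (_ : (U : Set X).Nonempty) (_ : (V : Set X).Nonempty),
        {f : C(X, X) | ∃ I : Set ℕ,
          IsIndepSet ⇑f (U : Set X) (V : Set X) I ∧ 0 < lowerDensity I} := by
    ext f
    simp only [Set.mem_setOf_eq, Set.mem_iInter, UPEAux.hasUPE_iff, Subtype.forall]
  rw [key]
  refine MeasurableSet.iInter fun U => MeasurableSet.iInter fun V =>
    MeasurableSet.iInter fun _ => MeasurableSet.iInter fun _ => ?_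
  have hU : IsOpen (U : Set X) := TopologicalSpace.isOpen_of_mem_countableBasis U.2
  have hV : IsOpen (V : Set X) := TopologicalSpace.isOpen_of_mem_countableBasis V.2
  have keym : {f : C(X, X) | ∃ I : Set ℕ,
        IsIndepSet ⇑f (U : Set X) (V : Set X) I ∧ 0 < lowerDensity I} =
      ⋃ k : ℕ, ⋂ N : ℕ, ⋃ M : ℕ, ⋃ (_ : N ≤ M), ⋃ J : Finset ℕ,
        ⋃ (_ : J ⊆ Finset.range M ∧ M ≤ (k + 1) * J.card),
        ⋂ S : Finset ℕ, ⋃ x : X, ⋂ j ∈ J,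
          {f : C(X, X) | (⇑f)^[j] x ∈ (if j ∈ S then (U : Set X) else (V : Set X))} := by
    ext f
    simp only [Set.mem_setOf_eq, UPEAux.good_iff, UPEAux.IndS, Set.mem_iUnion, Set.mem_iInter,
      exists_prop]
  rw [keym]
  refine MeasurableSet.iUnion fun k => MeasurableSet.iInter fun N =>
    MeasurableSet.iUnion fun M => MeasurableSet.iUnion fun _ =>
    MeasurableSet.iUnion fun J => MeasurableSet.iUnion fun _ =>
    MeasurableSet.iInter fun S => ?_
  apply open_meas
  refine isOpen_iUnion fun x => isOpen_biInter_finset fun j hj => ?_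
  have hff : IsOpen (if j ∈ S then (U : Set X) else (V : Set X)) := by
    split_ifs
    · exact hU
    · exact hV
  exact hff.preimage (UPEAux.continuous_iter_eval j x)
end

section
/- Let I = [0,1], T : I → I the piecewise linear map T(x) = 3x on [0,1/3], 2−3x on (1/3,2/3], 3x−2 on (2/3,1]. For a compact set A ⊆ I, let ψ(A) : I → I be the map that is the identity on A and on the closure of each interval J contiguous to A acts as the scaled copy of T on that interval. Then ψ(A) is a well-defined continuous map from I to I, and the assignment ψ : K(I) → C(I,I) is continuous (with K(I) carrying the Hausdorff metric and C(I,I) the uniform metric). -/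
open TopologicalSpace

/-- The piecewise linear map `T(x) = 3x` on `[0,1/3]`, `2 - 3x` on `(1/3,2/3]`,
`3x - 2` on `(2/3,1]`. -/
noncomputable def tentT (x : ℝ) : ℝ :=
  if x ≤ 1 / 3 then 3 * x else if x ≤ 2 / 3 then 2 - 3 * x else 3 * x - 2

/-- `(a,b)` is an interval contiguous to `A`, i.e. a maximal connected component of
`[0,1] \ A`. -/
def IsContig (A : Set ℝ) (a b : ℝ) : Prop :=
  a < b ∧ Set.Icc a b ⊆ Set.Icc 0 1 ∧ Set.Ioo a b ∩ A = ∅ ∧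
    (a ∈ A ∨ a = 0) ∧ (b ∈ A ∨ b = 1)

/-- The unit interval as a compact metric space. -/
abbrev unitI : Type := ↥(Set.Icc (0 : ℝ) 1)

open Set Metric

namespace Stmt8Aux

/-- The core algebraic formula: scaled tent map, written without division. -/
noncomputable def F (a b x : ℝ) : ℝ := a + abs ((b - a) - abs (3 * x - 2 * a - b))

noncomputable def lpt (S : Set ℝ) (x : ℝ) : ℝ := sSup (S ∩ Set.Iic x)
noncomputable def rpt (S : Set ℝ) (x : ℝ) : ℝ := sInf (S ∩ Set.Ici x)
noncomputable def fS (S : Set ℝ) (x : ℝ) : ℝ := F (lpt S x) (rpt S x) x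

structure Good (S : Set ℝ) : Prop where
  cpt : IsCompact S
  zero : (0:ℝ) ∈ S
  one : (1:ℝ) ∈ S
  sub : S ⊆ Set.Icc 0 1

variable {S T : Set ℝ} {x y : ℝ}

lemma lpt_mem (hS : Good S) (hx : x ∈ Icc (0:ℝ) 1) : lpt S x ∈ S ∩ Set.Iic x := by
  have hc : IsCompact (S ∩ Set.Iic x) := hS.cpt.inter_right isClosed_Iic
  exact hc.sSup_mem ⟨0, hS.zero, hx.1⟩

lemma le_lpt (hS : Good S) (hs : y ∈ S) (hyx : y ≤ x) : y ≤ lpt S x :=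
  le_csSup ((hS.cpt.inter_right isClosed_Iic).bddAbove) ⟨hs, hyx⟩

lemma rpt_mem (hS : Good S) (hx : x ∈ Icc (0:ℝ) 1) : rpt S x ∈ S ∩ Set.Ici x := by
  have hc : IsCompact (S ∩ Set.Ici x) := hS.cpt.inter_right isClosed_Ici
  exact hc.sInf_mem ⟨1, hS.one, hx.2⟩

lemma rpt_le (hS : Good S) (hs : y ∈ S) (hxy : x ≤ y) : rpt S x ≤ y :=
  csInf_le ((hS.cpt.inter_right isClosed_Ici).bddBelow) ⟨hs, hxy⟩

lemma lpt_self (hS : Good S) (hx : x ∈ Icc (0:ℝ) 1) (hxS : x ∈ S) : lpt S x = x :=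
  le_antisymm (lpt_mem hS hx).2 (le_lpt hS hxS le_rfl)

lemma rpt_self (hS : Good S) (hx : x ∈ Icc (0:ℝ) 1) (hxS : x ∈ S) : rpt S x = x :=
  le_antisymm (rpt_le hS hxS le_rfl) (rpt_mem hS hx).2

lemma F_bounds {a b : ℝ} (h1 : a ≤ x) (h2 : x ≤ b) :
    a ≤ F a b x ∧ F a b x ≤ b ∧ F a b x - a ≤ 3*(x-a) ∧ b - F a b x ≤ 3*(b-x) := by
  unfold F
  rcases abs_cases (3 * x - 2 * a - b) with ⟨e1, e1'⟩ | ⟨e1, e1'⟩ <;> rw [e1] <;>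
    rcases abs_cases ((b - a) - (3 * x - 2 * a - b)) with ⟨e2, e2'⟩ | ⟨e2, e2'⟩ <;>
    rcases abs_cases ((b - a) - -(3 * x - 2 * a - b)) with ⟨e3, e3'⟩ | ⟨e3, e3'⟩ <;>
    first
      | (rw [e2]; refine ⟨by linarith, by linarith, by linarith, by linarith⟩)
      | (rw [e3]; refine ⟨by linarith, by linarith, by linarith, by linarith⟩)

lemma fS_self (hS : Good S) (hx : x ∈ Icc (0:ℝ) 1) (hxS : x ∈ S) : fS S x = x := by
  unfold fS F
  rw [lpt_self hS hx hxS, rpt_self hS hx hxS]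
  have : 3 * x - 2 * x - x = 0 := by ring
  rw [this, abs_zero, sub_self, sub_zero, abs_zero, add_zero]

lemma fS_mem (hS : Good S) (hx : x ∈ Icc (0:ℝ) 1) : fS S x ∈ Icc (0:ℝ) 1 := by
  have hl := lpt_mem hS hx
  have hr := rpt_mem hS hx
  have hb := F_bounds (x := x) (a := lpt S x) (b := rpt S x) hl.2 hr.2
  exact ⟨le_trans (hS.sub hl.1).1 hb.1, le_trans hb.2.1 (hS.sub hr.1).2⟩

/-- near estimate: `fS` moves points by at most twice the distance to `S`. -/
lemma fS_near (hS : Good S) (hx : x ∈ Icc (0:ℝ) 1) (hs : y ∈ S) :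
    abs (fS S x - x) ≤ 2 * abs (x - y) := by
  have hl := lpt_mem hS hx
  have hr := rpt_mem hS hx
  have hb := F_bounds (x := x) (a := lpt S x) (b := rpt S x) hl.2 hr.2
  unfold fS at *
  rcases le_total y x with h | h
  · have h1 : y ≤ lpt S x := le_lpt hS hs h
    rw [abs_sub_le_iff, abs_of_nonneg (by linarith)]
    exact ⟨by linarith, by linarith⟩
  · have h1 : rpt S x ≤ y := rpt_le hS hs h
    rw [abs_sub_le_iff, abs_of_nonpos (by linarith)]
    exact ⟨by linarith, by linarith⟩

lemma fS_lip_aux (hS : Good S) (hx : x ∈ Icc (0:ℝ) 1) (hy : y ∈ Icc (0:ℝ) 1) (hxy : x ≤ y) :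
    abs (fS S x - fS S y) ≤ 3 * (y - x) := by
  by_cases h : (S ∩ Icc x y).Nonempty
  · obtain ⟨s, hsS, hsx, hsy⟩ := h
    have hp : rpt S x ≤ s := rpt_le hS hsS hsx
    have hr : s ≤ lpt S y := le_lpt hS hsS hsy
    have hpx := (rpt_mem hS hx).2
    have hry := (lpt_mem hS hy).2
    have hbx := F_bounds (x := x) (a := lpt S x) (b := rpt S x) (lpt_mem hS hx).2 hpx
    have hby := F_bounds (x := y) (a := lpt S y) (b := rpt S y) hry (rpt_mem hS hy).2
    rw [abs_sub_le_iff]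
    unfold fS at *
    exact ⟨by linarith, by linarith⟩
  · have hIic : S ∩ Set.Iic x = S ∩ Set.Iic y := by
      ext s
      refine ⟨fun hs => ⟨hs.1, hs.2.trans hxy⟩, fun hs => ⟨hs.1, ?_⟩⟩
      by_contra hc
      exact h ⟨s, hs.1, le_of_not_ge hc, hs.2⟩
    have hIci : S ∩ Set.Ici x = S ∩ Set.Ici y := by
      ext s
      refine ⟨fun hs => ⟨hs.1, ?_⟩, fun hs => ⟨hs.1, hxy.trans hs.2⟩⟩
      by_contra hc
      exact h ⟨s, hs.1, hs.2, le_of_not_ge hc⟩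
    unfold fS lpt rpt
    rw [hIic, hIci]
    set a := sSup (S ∩ Set.Iic y) with ha
    set b := sInf (S ∩ Set.Ici y) with hb
    unfold F
    have h1 := abs_abs_sub_abs_le_abs_sub ((b - a) - abs (3 * x - 2 * a - b))
      ((b - a) - abs (3 * y - 2 * a - b))
    have h2 := abs_abs_sub_abs_le_abs_sub (3 * x - 2 * a - b) (3 * y - 2 * a - b)
    have h3 : abs ((3 * x - 2 * a - b) - (3 * y - 2 * a - b)) = 3 * (y - x) := by
      rw [show (3 * x - 2 * a - b) - (3 * y - 2 * a - b) = -(3*(y-x)) by ring,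
        abs_neg, abs_of_nonneg (by linarith)]
    have h4 : abs (((b - a) - abs (3 * x - 2 * a - b)) - ((b - a) - abs (3 * y - 2 * a - b)))
        = abs (abs (3 * y - 2 * a - b) - abs (3 * x - 2 * a - b)) := by
      rw [show ((b - a) - abs (3 * x - 2 * a - b)) - ((b - a) - abs (3 * y - 2 * a - b))
        = abs (3 * y - 2 * a - b) - abs (3 * x - 2 * a - b) by ring]
    have h5 : abs (abs (3 * y - 2 * a - b) - abs (3 * x - 2 * a - b)) ≤ 3 * (y - x) := by
      have h6 := abs_abs_sub_abs_le_abs_sub (3 * y - 2 * a - b) (3 * x - 2 * a - b)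
      rw [show (3 * y - 2 * a - b) - (3 * x - 2 * a - b) = 3*(y-x) by ring] at h6
      calc _ ≤ abs (3*(y-x)) := h6
        _ = 3 * (y - x) := abs_of_nonneg (by linarith)
    calc abs ((a + abs ((b - a) - abs (3 * x - 2 * a - b)))
          - (a + abs ((b - a) - abs (3 * y - 2 * a - b))))
        = abs (abs ((b - a) - abs (3 * x - 2 * a - b))
          - abs ((b - a) - abs (3 * y - 2 * a - b))) := by
            rw [add_sub_add_left_eq_sub]
      _ ≤ abs (((b - a) - abs (3 * x - 2 * a - b)) - ((b - a) - abs (3 * y - 2 * a - b))) := h1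
      _ = _ := h4
      _ ≤ 3 * (y - x) := h5

lemma fS_lip (hS : Good S) (hx : x ∈ Icc (0:ℝ) 1) (hy : y ∈ Icc (0:ℝ) 1) :
    abs (fS S x - fS S y) ≤ 3 * abs (x - y) := by
  rcases le_total x y with h | h
  · calc abs (fS S x - fS S y) ≤ 3 * (y - x) := fS_lip_aux hS hx hy h
      _ = 3 * abs (x - y) := by rw [abs_sub_comm, abs_of_nonneg (by linarith)]
  · calc abs (fS S x - fS S y) = abs (fS S y - fS S x) := abs_sub_comm _ _
      _ ≤ 3 * (x - y) := fS_lip_aux hS hy hx h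
      _ = 3 * abs (x - y) := by rw [abs_of_nonneg (by linarith)]



lemma F_compare {a b a' b' x ε : ℝ} (ha : abs (a - a') ≤ ε) (hb : abs (b - b') ≤ ε) :
    abs (F a b x - F a' b' x) ≤ 6 * ε := by
  have haa := abs_le.mp ha
  have hbb := abs_le.mp hb
  have h1 := abs_abs_sub_abs_le_abs_sub (3*x-2*a-b) (3*x-2*a'-b')
  have h3 : abs ((3*x-2*a-b) - (3*x-2*a'-b')) ≤ 3 * ε :=
    abs_le.mpr ⟨by linarith, by linarith⟩
  have hcc : abs (abs (3*x-2*a-b) - abs (3*x-2*a'-b')) ≤ 3 * ε := le_trans h1 h3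
  have hcc' := abs_le.mp hcc
  have h2 := abs_abs_sub_abs_le_abs_sub ((b-a) - abs (3*x-2*a-b)) ((b'-a') - abs (3*x-2*a'-b'))
  have h4 : abs (((b-a) - abs (3*x-2*a-b)) - ((b'-a') - abs (3*x-2*a'-b'))) ≤ 5 * ε :=
    abs_le.mpr ⟨by linarith, by linarith⟩
  have h5 : abs (abs ((b-a) - abs (3*x-2*a-b)) - abs ((b'-a') - abs (3*x-2*a'-b'))) ≤ 5 * ε :=
    le_trans h2 h4
  have h5' := abs_le.mp h5
  unfold F
  exact abs_le.mpr ⟨by linarith, by linarith⟩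

lemma fS_near_pair (hS : Good S) (hT : Good T) {ε : ℝ} (hε : 0 ≤ ε)
    (hST : ∀ s ∈ S, ∃ t ∈ T, abs (s - t) ≤ ε)
    (hx : x ∈ Icc (0:ℝ) 1) {s : ℝ} (hs : s ∈ S) (hd : abs (x - s) ≤ 2 * ε) :
    abs (fS S x - fS T x) ≤ 10 * ε := by
  have hSn : abs (fS S x - x) ≤ 4 * ε := by
    have := fS_near hS hx hs; linarith
  obtain ⟨t, htT, hst⟩ := hST s hs
  have hxt : abs (x - t) ≤ 3 * ε := le_trans (abs_sub_le x s t) (by linarith)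
  have hTn : abs (fS T x - x) ≤ 6 * ε := by
    have := fS_near hT hx htT; linarith
  calc abs (fS S x - fS T x) ≤ abs (fS S x - x) + abs (x - fS T x) := abs_sub_le _ _ _
    _ ≤ 4 * ε + 6 * ε := by rw [abs_sub_comm x (fS T x)]; linarith
    _ = 10 * ε := by ring

lemma fS_compare (hS : Good S) (hT : Good T) {ε : ℝ} (hε : 0 ≤ ε)
    (hST : ∀ s ∈ S, ∃ t ∈ T, abs (s - t) ≤ ε)
    (hTS : ∀ t ∈ T, ∃ s ∈ S, abs (t - s) ≤ ε)
    (hx : x ∈ Icc (0:ℝ) 1) : abs (fS S x - fS T x) ≤ 10 * ε := by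
  have hlS := lpt_mem hS hx
  have hrS := rpt_mem hS hx
  have hlT := lpt_mem hT hx
  have hrT := rpt_mem hT hx
  by_cases c1 : x - lpt S x ≤ 2 * ε
  · exact fS_near_pair hS hT hε hST hx hlS.1
      (by rw [abs_of_nonneg (by linarith [Set.mem_Iic.mp hlS.2])]; linarith)
  by_cases c2 : rpt S x - x ≤ 2 * ε
  · exact fS_near_pair hS hT hε hST hx hrS.1
      (by rw [abs_of_nonpos (by linarith [Set.mem_Ici.mp hrS.2])]; linarith [Set.mem_Ici.mp hrS.2])
  by_cases c3 : x - lpt T x ≤ 2 * ε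
  · rw [abs_sub_comm]
    exact fS_near_pair hT hS hε hTS hx hlT.1
      (by rw [abs_of_nonneg (by linarith [Set.mem_Iic.mp hlT.2])]; linarith)
  by_cases c4 : rpt T x - x ≤ 2 * ε
  · rw [abs_sub_comm]
    exact fS_near_pair hT hS hε hTS hx hrT.1
      (by rw [abs_of_nonpos (by linarith [Set.mem_Ici.mp hrT.2])]; linarith [Set.mem_Ici.mp hrT.2])
  -- far case
  push_neg at c1 c2 c3 c4
  have hla : abs (lpt S x - lpt T x) ≤ ε := by
    obtain ⟨t, htT, hst⟩ := hST (lpt S x) hlS.1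
    have h1 := abs_le.mp hst
    have ht1 : lpt T x ≥ lpt S x - ε := le_trans (by linarith) (le_lpt hT htT (by linarith))
    obtain ⟨s, hsS, hts⟩ := hTS (lpt T x) hlT.1
    have h2 := abs_le.mp hts
    have ht2 : lpt S x ≥ lpt T x - ε := le_trans (by linarith) (le_lpt hS hsS (by linarith))
    exact abs_le.mpr ⟨by linarith, by linarith⟩
  have hrb : abs (rpt S x - rpt T x) ≤ ε := by
    obtain ⟨t, htT, hst⟩ := hST (rpt S x) hrS.1
    have h1 := abs_le.mp hst
    have ht1 : rpt T x ≤ rpt S x + ε := le_trans (rpt_le hT htT (by linarith)) (by linarith)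
    obtain ⟨s, hsS, hts⟩ := hTS (rpt T x) hrT.1
    have h2 := abs_le.mp hts
    have ht2 : rpt S x ≤ rpt T x + ε := le_trans (rpt_le hS hsS (by linarith)) (by linarith)
    exact abs_le.mpr ⟨by linarith, by linarith⟩
  calc abs (fS S x - fS T x) ≤ 6 * ε := F_compare hla hrb
    _ ≤ 10 * ε := by linarith

lemma lpt_contig (hS : Good S) {a b : ℝ} (haS : a ∈ S) (hdis : Ioo a b ∩ S = ∅)
    (hx1 : a < x) (hx2 : x < b) : lpt S x = a := by
  refine le_antisymm (csSup_le ⟨a, haS, hx1.le⟩ fun s hs => ?_) (le_lpt hS haS hx1.le)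
  by_contra hc
  exact absurd (hdis ▸ (⟨⟨lt_of_not_ge hc, lt_of_le_of_lt hs.2 hx2⟩, hs.1⟩ :
    s ∈ Ioo a b ∩ S)) (Set.notMem_empty s)

lemma rpt_contig (hS : Good S) {a b : ℝ} (hbS : b ∈ S) (hdis : Ioo a b ∩ S = ∅)
    (hx1 : a < x) (hx2 : x < b) : rpt S x = b := by
  refine le_antisymm (rpt_le hS hbS hx2.le) (le_csInf ⟨b, hbS, hx2.le⟩ fun s hs => ?_)
  by_contra hc
  exact absurd (hdis ▸ (⟨⟨lt_of_lt_of_le hx1 hs.2, lt_of_not_ge hc⟩, hs.1⟩ :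
    s ∈ Ioo a b ∩ S)) (Set.notMem_empty s)



lemma tent_eq_F {a b x : ℝ} (hab : a < b) (h1 : a ≤ x) (h2 : x ≤ b) :
    a + (b - a) * tentT ((x - a) / (b - a)) = F a b x := by
  have hba : (0:ℝ) < b - a := by linarith
  have key : (b - a) * ((x - a) / (b - a)) = x - a := by field_simp
  unfold tentT F
  split_ifs with hA hB
  · have m1 := mul_le_mul_of_nonneg_left hA hba.le
    rw [abs_of_nonpos (by linarith : 3*x-2*a-b ≤ 0), abs_of_nonneg (by linarith)]
    linarith
  · have m1 := mul_le_mul_of_nonneg_left (le_of_lt (not_le.mp hA)) hba.le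
    have m2 := mul_le_mul_of_nonneg_left hB hba.le
    rw [abs_of_nonneg (by linarith : (0:ℝ) ≤ 3*x-2*a-b), abs_of_nonneg (by linarith)]
    linarith
  · have m2 := mul_le_mul_of_nonneg_left (le_of_lt (not_le.mp hB)) hba.le
    rw [abs_of_nonneg (by linarith : (0:ℝ) ≤ 3*x-2*a-b), abs_of_nonpos (by linarith)]
    linarith

def SA (A : NonemptyCompacts unitI) : Set ℝ := (Subtype.val '' (A : Set unitI)) ∪ {0, 1}

lemma good_SA (A : NonemptyCompacts unitI) : Good (SA A) := by
  refine ⟨(A.isCompact.image continuous_subtype_val).union ?_,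
    Or.inr (Set.mem_insert 0 {1}), Or.inr (Set.mem_insert_of_mem 0 rfl), ?_⟩
  · exact (Set.toFinite ({0,1} : Set ℝ)).isCompact
  · rintro s (⟨p, _, rfl⟩ | hs)
    · exact p.2
    · rcases hs with h | h
      · rw [h]; exact ⟨le_refl 0, by norm_num⟩
      · rw [h]; exact ⟨by norm_num, le_refl 1⟩

noncomputable def psi (A : NonemptyCompacts unitI) : C(unitI, unitI) :=
  ⟨fun x => ⟨fS (SA A) x.val, fS_mem (good_SA A) x.2⟩, by
    apply Continuous.subtype_mk
    have hl : LipschitzWith 3 (fun x : unitI => fS (SA A) x.val) := by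
      apply LipschitzWith.of_dist_le_mul
      intro u v
      rw [Subtype.dist_eq, Real.dist_eq, Real.dist_eq]
      have h3 : ((3 : NNReal) : ℝ) = 3 := by norm_num
      rw [h3]
      exact fS_lip (x := u.val) (y := v.val) (good_SA A) u.2 v.2
    exact hl.continuous⟩

end Stmt8Aux

open Stmt8Aux

/-- There is a continuous assignment `ψ : K(I) → C(I,I)` such that `ψ(A)` is the identity on
`A` and, on the closure of each interval `J = (a,b)` contiguous to `A`, acts as the scaled
copy of the tent-like map `T` on `[a,b]`. In particular each `ψ(A)` is a well-defined
continuous self-map of `I`. -/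
theorem stmt8 :
    ∃ ψ : NonemptyCompacts unitI → C(unitI, unitI), Continuous ψ ∧
      ∀ A : NonemptyCompacts unitI,
        (∀ x : unitI, x ∈ A → ψ A x = x) ∧
        (∀ a b : ℝ, IsContig (Subtype.val '' (A : Set unitI)) a b →
          ∀ x : unitI, (x : ℝ) ∈ Set.Icc a b →
            ((ψ A x : ℝ)) = a + (b - a) * tentT (((x : ℝ) - a) / (b - a))) := by
  refine ⟨psi, ?_, fun A => ⟨?_, ?_⟩⟩
  · -- continuity
    rw [Metric.continuous_iff]
    intro A ε hε
    refine ⟨ε / 11, by positivity, fun B hB => ?_⟩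
    rw [NonemptyCompacts.dist_eq] at hB
    have hed : EMetric.hausdorffEdist (B : Set unitI) (A : Set unitI) ≠ ⊤ :=
      Metric.hausdorffEdist_ne_top_of_nonempty_of_bounded B.nonempty A.nonempty
        B.isCompact.isBounded A.isCompact.isBounded
    have hBA : ∀ s ∈ SA B, ∃ t ∈ SA A, abs (s - t) ≤ ε / 11 := by
      rintro s (⟨p, hp, rfl⟩ | hs)
      · obtain ⟨q, hq, hd⟩ := Metric.exists_dist_lt_of_hausdorffDist_lt hp hB hed
        refine ⟨q.val, Or.inl ⟨q, hq, rfl⟩, ?_⟩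
        rw [Subtype.dist_eq, Real.dist_eq] at hd
        exact hd.le
      · exact ⟨s, Or.inr hs, by simp [sub_self]; positivity⟩
    have hAB : ∀ t ∈ SA A, ∃ s ∈ SA B, abs (t - s) ≤ ε / 11 := by
      rintro t (⟨q, hq, rfl⟩ | ht)
      · obtain ⟨p, hp, hd⟩ := Metric.exists_dist_lt_of_hausdorffDist_lt' hq hB hed
        refine ⟨p.val, Or.inl ⟨p, hp, rfl⟩, ?_⟩
        rw [Subtype.dist_eq, Real.dist_eq] at hd
        rw [abs_sub_comm]
        exact hd.le
      · exact ⟨t, Or.inr ht, by simp [sub_self]; positivity⟩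
    have hkey : ∀ x : unitI, dist (psi B x) (psi A x) ≤ 10 * (ε / 11) := by
      intro x
      rw [Subtype.dist_eq, Real.dist_eq]
      exact fS_compare (good_SA B) (good_SA A) (by positivity) hBA hAB x.2
    calc dist (psi B) (psi A) ≤ 10 * (ε / 11) :=
          (ContinuousMap.dist_le (by positivity)).mpr hkey
      _ < ε := by linarith
  · -- identity on A
    intro x hx
    exact Subtype.ext (fS_self (good_SA A) x.2 (Or.inl ⟨x, hx, rfl⟩))
  · -- tent on contiguous intervals
    rintro a b ⟨hab, hsub, hdis, ha, hb⟩ x hx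
    have ha01 : a ∈ Icc (0:ℝ) 1 := hsub ⟨le_refl a, hab.le⟩
    have hb01 : b ∈ Icc (0:ℝ) 1 := hsub ⟨hab.le, le_refl b⟩
    have haS : a ∈ SA A := ha.elim Or.inl (fun h => Or.inr (by rw [h]; exact Set.mem_insert 0 {1}))
    have hbS : b ∈ SA A := hb.elim Or.inl
      (fun h => Or.inr (by rw [h]; exact Set.mem_insert_of_mem 0 rfl))
    have hdis' : Ioo a b ∩ SA A = ∅ := by
      rw [Set.eq_empty_iff_forall_notMem]
      rintro y ⟨hy, (hyA | hy01)⟩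
      · exact absurd (hdis ▸ (⟨hy, hyA⟩ : y ∈ Ioo a b ∩ _)) (Set.notMem_empty y)
      · rcases hy01 with h | h
        · rw [h] at hy; exact absurd hy.1 (not_lt.mpr ha01.1)
        · rw [h] at hy; exact absurd hy.2 (not_lt.mpr hb01.2)
    show fS (SA A) x.val = _
    rcases eq_or_lt_of_le hx.1 with hxa | hxa
    · have hself : fS (SA A) x.val = x.val := fS_self (good_SA A) x.2 (by rw [← hxa]; exact haS)
      rw [hself, ← hxa, sub_self, zero_div]
      have : tentT 0 = 0 := by unfold tentT; norm_num
      rw [this, mul_zero, add_zero]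
    rcases eq_or_lt_of_le hx.2 with hxb | hxb
    · have hself : fS (SA A) x.val = x.val := fS_self (good_SA A) x.2 (by rw [hxb]; exact hbS)
      rw [hself, hxb, div_self (by linarith : b - a ≠ 0)]
      have : tentT 1 = 1 := by unfold tentT; norm_num
      rw [this, mul_one]
      ring
    · have hl : lpt (SA A) x.val = a := lpt_contig (good_SA A) haS hdis' hxa hxb
      have hr : rpt (SA A) x.val = b := rpt_contig (good_SA A) hbS hdis' hxa hxb
      unfold fS
      rw [hl, hr]
      exact (tent_eq_F hab hx.1 hx.2).symm
end

section
/- Let A ⊆ [0,1] be compact and ψ(A) be the interval map which is the identity on A and a scaled tent-like mixing map on the closure of each contiguous interval. If the IE-pair set of each scaled copy on an interval J is all of (closure J)², then the IE-pair set of ψ(A) equals the union over contiguous intervals J of (closure J)² together with the diagonal of [0,1]. -/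
open scoped Classical

/-- The closed subinterval `[a,b]` of the unit interval. -/
def subIcc (a b : ℝ) : Set unitI := {x : unitI | a ≤ (x : ℝ) ∧ (x : ℝ) ≤ b}

open Filter Set

lemma lowerDensity_subsingleton {I : Set ℕ} (h : I.Subsingleton) : lowerDensity I = 0 := by
  have ht : Filter.Tendsto
      (fun n => (((Finset.range n).filter (fun k => k ∈ I)).card : ℝ) / n) atTop (nhds 0) := by
    apply squeeze_zero (fun n => by positivity) (g := fun n : ℕ => 1 / (n:ℝ))
    · intro n
      rcases Nat.eq_zero_or_pos n with rfl | hn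
      · simp
      · have hcard : ((Finset.range n).filter (fun k => k ∈ I)).card ≤ 1 :=
          Finset.card_le_one.mpr fun a ha b hb =>
            h (Finset.mem_filter.mp ha).2 (Finset.mem_filter.mp hb).2
        gcongr
        exact_mod_cast hcard
    · exact tendsto_one_div_atTop_nhds_zero_nat
  unfold lowerDensity
  exact ht.liminf_eq

lemma lowerDensity_univ : lowerDensity (Set.univ : Set ℕ) = 1 := by
  unfold lowerDensity
  apply Filter.Tendsto.liminf_eq
  refine Filter.Tendsto.congr' ?_ (tendsto_const_nhds (x := (1:ℝ)) (f := (atTop : Filter ℕ)))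
  filter_upwards [eventually_ge_atTop 1] with n hn
  have : (n:ℝ) ≠ 0 := by positivity
  simp only [Set.mem_univ, Finset.filter_true, Finset.card_range]
  field_simp

lemma exists_lt_of_density_pos {I : Set ℕ} (h : 0 < lowerDensity I) :
    ∃ j k, j ∈ I ∧ k ∈ I ∧ j < k := by
  by_contra hc
  push_neg at hc
  have hs : I.Subsingleton := fun a ha b hb => le_antisymm (hc b a hb ha) (hc a b ha hb)
  rw [lowerDensity_subsingleton hs] at h
  exact lt_irrefl _ h

/-- Construction of a contiguous interval around a "gap" `[u,v]`. -/
lemma gap_contig {A' : Set ℝ} (hA' : IsCompact A') (hsub : A' ⊆ Set.Icc 0 1)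
    {u v : ℝ} (hu : u ∈ Set.Icc 0 1) (hv : v ∈ Set.Icc 0 1) (huv : u ≤ v)
    (hne : u < v ∨ u ∉ A') (hgap : ∀ t ∈ A', t ≤ u ∨ v ≤ t) :
    ∃ a b, IsContig A' a b ∧ a ≤ u ∧ v ≤ b ∧
      (∀ c ∈ A', v ≤ c → b ≤ c) ∧ (∀ c ∈ A', c ≤ u → c ≤ a) := by
  set S₁ : Set ℝ := (A' ∩ Set.Icc 0 u) ∪ {0} with hS₁
  set S₂ : Set ℝ := (A' ∩ Set.Icc v 1) ∪ {1} with hS₂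
  have hc₁ : IsCompact S₁ := ((hA'.inter_right isClosed_Icc).union isCompact_singleton)
  have hc₂ : IsCompact S₂ := ((hA'.inter_right isClosed_Icc).union isCompact_singleton)
  obtain ⟨a, haS, hamax⟩ := hc₁.exists_isGreatest ⟨0, Or.inr rfl⟩
  obtain ⟨b, hbS, hbmin⟩ := hc₂.exists_isLeast ⟨1, Or.inr rfl⟩
  have hau : a ≤ u := by
    rcases haS with ⟨_, _, h⟩ | h
    · exact h
    · simp only [Set.mem_singleton_iff] at h; exact h ▸ hu.1
  have hvb : v ≤ b := by
    rcases hbS with ⟨_, h, _⟩ | h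
    · exact h
    · simp only [Set.mem_singleton_iff] at h; exact h ▸ hv.2
  have ha0 : 0 ≤ a := hamax (Or.inr rfl)
  have hb1 : b ≤ 1 := hbmin (Or.inr rfl)
  have haA : a ∈ A' ∨ a = 0 := by
    rcases haS with ⟨h, _⟩ | h
    · exact Or.inl h
    · exact Or.inr h
  have hbA : b ∈ A' ∨ b = 1 := by
    rcases hbS with ⟨h, _⟩ | h
    · exact Or.inl h
    · exact Or.inr h
  have hab : a < b := by
    rcases hne with h | h
    · exact lt_of_le_of_lt hau (lt_of_lt_of_le h hvb)
    · rcases lt_or_eq_of_le (le_trans hau (le_trans huv hvb)) with h' | h'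
      · exact h'
      -- a = b, so a = u = v = b
      · exfalso
        have hua : u = a := le_antisymm (h' ▸ le_trans huv hvb) hau
        have hvb' : v = b := le_antisymm hvb (h' ▸ le_trans hau huv)
        rcases haA with hA | h0
        · exact h (hua ▸ hA)
        · rcases hbA with hA | h1
          · exact h (hua ▸ h' ▸ hA)
          · have : (0:ℝ) = 1 := by rw [← h0, h', h1]
            norm_num at this
  refine ⟨a, b, ⟨hab, Set.Icc_subset_Icc ha0 hb1, ?_, haA, hbA⟩, hau, hvb, ?_, ?_⟩
  · ext t
    simp only [Set.mem_inter_iff, Set.mem_Ioo, Set.mem_empty_iff_false, iff_false, not_and]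
    rintro ⟨hat, htb⟩ htA
    rcases hgap t htA with h | h
    · exact absurd (hamax (Or.inl ⟨htA, (hsub htA).1, h⟩)) (not_le.mpr hat)
    · exact absurd (hbmin (Or.inl ⟨htA, h, (hsub htA).2⟩)) (not_le.mpr htb)
  · intro c hc hvc
    exact hbmin (Or.inl ⟨hc, hvc, (hsub hc).2⟩)
  · intro c hc hcu
    exact hamax (Or.inl ⟨hc, (hsub hc).1, hcu⟩)

lemma image_val_subset (A : Set unitI) : (Subtype.val '' A : Set ℝ) ⊆ Set.Icc 0 1 := by
  rintro t ⟨z, _, rfl⟩; exact z.2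

lemma step_le (A : Set unitI) (hA : IsCompact A) (f : C(unitI, unitI))
    (hfix : ∀ x ∈ A, f x = x)
    (hinv : ∀ a b : ℝ, IsContig (Subtype.val '' A) a b →
      Set.MapsTo ⇑f (subIcc a b) (subIcc a b))
    {c : ℝ} (hc : c ∈ Subtype.val '' A) (w : unitI) (hw : (w : ℝ) ≤ c) :
    ((f w : unitI) : ℝ) ≤ c := by
  by_cases hwA : (w : ℝ) ∈ (Subtype.val '' A : Set ℝ)
  · obtain ⟨z, hz, hzv⟩ := hwA
    have : z = w := Subtype.coe_injective hzv
    rw [← this, hfix z hz, this]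
    exact hw
  · obtain ⟨a, b, hcontig, hau, hvb, hbc, -⟩ :=
      gap_contig (hA.image continuous_subtype_val) (image_val_subset A)
        w.2 w.2 le_rfl (Or.inr hwA) (fun t _ => le_total t _)
    have hmem : w ∈ subIcc a b := ⟨hau, hvb⟩
    have := hinv a b hcontig hmem
    exact le_trans this.2 (hbc c hc hw)

lemma step_ge (A : Set unitI) (hA : IsCompact A) (f : C(unitI, unitI))
    (hfix : ∀ x ∈ A, f x = x)
    (hinv : ∀ a b : ℝ, IsContig (Subtype.val '' A) a b →
      Set.MapsTo ⇑f (subIcc a b) (subIcc a b))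
    {c : ℝ} (hc : c ∈ Subtype.val '' A) (w : unitI) (hw : c ≤ (w : ℝ)) :
    c ≤ ((f w : unitI) : ℝ) := by
  by_cases hwA : (w : ℝ) ∈ (Subtype.val '' A : Set ℝ)
  · obtain ⟨z, hz, hzv⟩ := hwA
    have : z = w := Subtype.coe_injective hzv
    rw [← this, hfix z hz, this]
    exact hw
  · obtain ⟨a, b, hcontig, hau, hvb, -, hca⟩ :=
      gap_contig (hA.image continuous_subtype_val) (image_val_subset A)
        w.2 w.2 le_rfl (Or.inr hwA) (fun t _ => le_total t _)
    have hmem : w ∈ subIcc a b := ⟨hau, hvb⟩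
    have := hinv a b hcontig hmem
    exact le_trans (hca c hc hw) this.1

lemma iter_le (A : Set unitI) (hA : IsCompact A) (f : C(unitI, unitI))
    (hfix : ∀ x ∈ A, f x = x)
    (hinv : ∀ a b : ℝ, IsContig (Subtype.val '' A) a b →
      Set.MapsTo ⇑f (subIcc a b) (subIcc a b))
    {c : ℝ} (hc : c ∈ Subtype.val '' A) (n : ℕ) (w : unitI) (hw : (w : ℝ) ≤ c) :
    ((⇑f)^[n] w : ℝ) ≤ c := by
  induction n generalizing w with
  | zero => simpa using hw
  | succ n ih =>
    rw [Function.iterate_succ_apply]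
    exact ih _ (step_le A hA f hfix hinv hc w hw)

lemma iter_ge (A : Set unitI) (hA : IsCompact A) (f : C(unitI, unitI))
    (hfix : ∀ x ∈ A, f x = x)
    (hinv : ∀ a b : ℝ, IsContig (Subtype.val '' A) a b →
      Set.MapsTo ⇑f (subIcc a b) (subIcc a b))
    {c : ℝ} (hc : c ∈ Subtype.val '' A) (n : ℕ) (w : unitI) (hw : c ≤ (w : ℝ)) :
    c ≤ ((⇑f)^[n] w : ℝ) := by
  induction n generalizing w with
  | zero => simpa using hw
  | succ n ih =>
    rw [Function.iterate_succ_apply]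
    exact ih _ (step_ge A hA f hfix hinv hc w hw)

lemma IE_restrict {s : Set unitI} (f : C(unitI, unitI)) (h : Set.MapsTo ⇑f s s)
    {p : ↥s × ↥s} (hp : IEPair (Set.MapsTo.restrict ⇑f s s h) p) :
    IEPair ⇑f ((p.1 : unitI), (p.2 : unitI)) := by
  intro A₁ A₂ hA₁ hA₂ h1 h2
  obtain ⟨I, hI, hd⟩ := hp (Subtype.val ⁻¹' A₁) (Subtype.val ⁻¹' A₂)
    (hA₁.preimage continuous_subtype_val) (hA₂.preimage continuous_subtype_val) h1 h2
  refine ⟨I, ?_, hd⟩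
  intro J hJ g
  obtain ⟨z, hz⟩ := hI J hJ g
  refine ⟨(z : unitI), fun j hj => ?_⟩
  have hz' := hz j hj
  have hiter : ((Set.MapsTo.restrict ⇑f s s h)^[j] z : unitI) = (⇑f)^[j] (z : unitI) :=
    Set.MapsTo.coe_iterate_restrict h z j
  cases hg : g j with
  | true =>
    rw [hg, if_pos rfl] at hz'
    rw [if_pos rfl, ← hiter]; exact hz'
  | false =>
    rw [hg, if_neg (by simp)] at hz'
    rw [if_neg (by simp), ← hiter]; exact hz'

/-- Let `f = ψ(A)` be the interval map which is the identity on the compact set `A` and leaves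
the closure of each contiguous interval invariant. If the IE-pair set of the restriction of
`f` to the closure of each contiguous interval `J` is all of `(closure J)²`, then the IE-pair
set of `f` equals the union over contiguous intervals `J` of `(closure J)²` together with the
diagonal of `[0,1]`. -/
theorem stmt9 (A : Set unitI) (hA : IsCompact A) (f : C(unitI, unitI))
    (hfix : ∀ x ∈ A, f x = x)
    (hinv : ∀ a b : ℝ, IsContig (Subtype.val '' A) a b →
      Set.MapsTo ⇑f (subIcc a b) (subIcc a b))
    (hIE : ∀ (a b : ℝ) (h : IsContig (Subtype.val '' A) a b),
      {p : ↥(subIcc a b) × ↥(subIcc a b) |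
        IEPair (Set.MapsTo.restrict ⇑f _ _ (hinv a b h)) p} = Set.univ) :
    {p : unitI × unitI | IEPair ⇑f p} =
      (⋃ (a : ℝ) (b : ℝ) (_ : IsContig (Subtype.val '' A) a b),
        (subIcc a b) ×ˢ (subIcc a b)) ∪ Set.diagonal unitI := by
  have hA' : IsCompact (Subtype.val '' A : Set ℝ) := hA.image continuous_subtype_val
  have hsub : (Subtype.val '' A : Set ℝ) ⊆ Set.Icc 0 1 := image_val_subset A
  have key : ∀ x y : unitI, IEPair ⇑f (x, y) → (x : ℝ) < (y : ℝ) →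
      ∃ a b, IsContig (Subtype.val '' A) a b ∧ x ∈ subIcc a b ∧ y ∈ subIcc a b := by
    intro x y hp hlt
    by_cases hsep : ∃ c ∈ Subtype.val '' A, (x : ℝ) < c ∧ c < (y : ℝ)
    · exfalso
      obtain ⟨c, hcA, hxc, hcy⟩ := hsep
      obtain ⟨I, hI, hd⟩ := hp (Subtype.val ⁻¹' Set.Iio c) (Subtype.val ⁻¹' Set.Ioi c)
        (isOpen_Iio.preimage continuous_subtype_val)
        (isOpen_Ioi.preimage continuous_subtype_val) hxc hcy
      obtain ⟨j₁, j₂, hj₁, hj₂, hjlt⟩ := exists_lt_of_density_pos hd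
      obtain ⟨z, hz⟩ := hI {j₁, j₂} (by
          intro t ht
          simp only [Finset.coe_insert, Finset.coe_singleton, Set.mem_insert_iff,
            Set.mem_singleton_iff] at ht
          rcases ht with rfl | rfl <;> assumption)
        (fun j => decide (j = j₁))
      have h1 := hz j₁ (Finset.mem_insert_self _ _)
      have h2 := hz j₂ (Finset.mem_insert_of_mem (Finset.mem_singleton_self _))
      rw [if_pos (by simp)] at h1
      rw [if_neg (by simp [Nat.ne_of_gt hjlt])] at h2
      have he : (⇑f)^[j₂] z = (⇑f)^[j₂ - j₁] ((⇑f)^[j₁] z) := by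
        rw [← Function.iterate_add_apply, Nat.sub_add_cancel hjlt.le]
      have hle := iter_le A hA f hfix hinv hcA (j₂ - j₁) ((⇑f)^[j₁] z) (le_of_lt h1)
      rw [← he] at hle
      exact absurd h2 (not_lt.mpr hle)
    · push_neg at hsep
      have hgap : ∀ t ∈ Subtype.val '' A, t ≤ (x : ℝ) ∨ (y : ℝ) ≤ t := by
        intro t ht
        rcases le_or_gt t (x : ℝ) with h | h
        · exact Or.inl h
        · exact Or.inr (hsep t ht h)
      obtain ⟨a, b, hcontig, hax, hyb, -, -⟩ :=
        gap_contig hA' hsub x.2 y.2 hlt.le (Or.inl hlt) hgap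
      exact ⟨a, b, hcontig, ⟨hax, le_trans hlt.le hyb⟩, ⟨le_trans hax hlt.le, hyb⟩⟩
  ext ⟨x, y⟩
  simp only [Set.mem_setOf_eq, Set.mem_union, Set.mem_iUnion, Set.mem_prod,
    Set.mem_diagonal_iff]
  constructor
  · intro hp
    rcases eq_or_ne x y with heq | hne
    · exact Or.inr heq
    · have hne' : (x : ℝ) ≠ (y : ℝ) := fun h => hne (Subtype.coe_injective h)
      rcases lt_or_gt_of_ne hne' with h | h
      · obtain ⟨a, b, hc, hx, hy⟩ := key x y hp h
        exact Or.inl ⟨a, b, hc, hx, hy⟩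
      · have hp' : IEPair ⇑f (y, x) := by
          intro B₁ B₂ o1 o2 m1 m2
          obtain ⟨I, hI, hd⟩ := hp B₂ B₁ o2 o1 m2 m1
          refine ⟨I, ?_, hd⟩
          intro J hJ g
          obtain ⟨z, hz⟩ := hI J hJ (fun j => !(g j))
          refine ⟨z, fun j hj => ?_⟩
          have hzj := hz j hj
          cases hg : g j with
          | true => simp only [hg, Bool.not_true, if_neg, if_pos] at hzj ⊢; simpa using hzj
          | false => simp only [hg, Bool.not_false, if_pos, if_neg] at hzj ⊢; simpa using hzj
        obtain ⟨a, b, hc, hy', hx'⟩ := key y x hp' h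
        exact Or.inl ⟨a, b, hc, hx', hy'⟩
  · rintro (⟨a, b, hc, hx, hy⟩ | heq)
    · have h' := hIE a b hc
      rw [Set.eq_univ_iff_forall] at h'
      exact IE_restrict f (hinv a b hc) (h' (⟨x, hx⟩, ⟨y, hy⟩))
    · have heq' : x = y := heq
      subst heq'
      by_cases hxA : x ∈ A
      · intro B₁ B₂ o1 o2 m1 m2
        refine ⟨Set.univ, ?_, by rw [lowerDensity_univ]; norm_num⟩
        intro J hJ g
        refine ⟨x, fun j hj => ?_⟩
        have hit : (⇑f)^[j] x = x := Function.iterate_fixed (hfix x hxA) j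
        rw [hit]
        cases g j with
        | true => simpa using m1
        | false => simpa using m2
      · have hxA' : (x : ℝ) ∉ (Subtype.val '' A : Set ℝ) := by
          rintro ⟨z, hz, hzv⟩
          exact hxA (Subtype.coe_injective hzv ▸ hz)
        obtain ⟨a, b, hcontig, hax, hxb, -, -⟩ :=
          gap_contig hA' hsub x.2 x.2 le_rfl (Or.inr hxA') (fun t _ => le_total t _)
        have h' := hIE a b hcontig
        rw [Set.eq_univ_iff_forall] at h'
        exact IE_restrict f (hinv a b hcontig) (h' (⟨x, ⟨hax, hxb⟩⟩, ⟨x, ⟨hax, hxb⟩⟩))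
end

section
/- With ψ as above, for each countable ordinal α, Γ^α(E([0,1], ψ(A))) = ⋃_{J ∈ C(A^α)} (closure J)² ∪ Δ_{[0,1]}, where A^α is the α-th Cantor–Bendixson derivative of A and C(B) denotes the intervals contiguous to B. Consequently, ψ(A) has CPE if and only if A is countable. -/
open scoped Classical

/-- `Γ(E) = closure (E⁺ ∪ Δ_X)`. -/
def GammaStep {X : Type*} [TopologicalSpace X] (E : Set (X × X)) : Set (X × X) :=
  closure (plusSet E ∪ Set.diagonal X)

/-- Transfinite iteration of `Γ`. -/
noncomputable def GammaIter {X : Type*} [TopologicalSpace X] (E : Set (X × X)) (o : Ordinal.{0}) :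
    Set (X × X) :=
  Ordinal.limitRecOn o E (fun _ ih => GammaStep ih)
    (fun o _ ih => closure (⋃ b : {b : Ordinal // b < o}, ih b.1 b.2))

/-- The Cantor–Bendixson derivative: the set of accumulation points of `A`. -/
def cbDeriv {X : Type*} [TopologicalSpace X] (A : Set X) : Set X :=
  {x | AccPt x (Filter.principal A)}

/-- The transfinite iterates `A^α` of the Cantor–Bendixson derivative (intersection at limit
stages). -/
noncomputable def CBIter {X : Type*} [TopologicalSpace X] (A : Set X) (o : Ordinal.{0}) :
    Set X :=
  Ordinal.limitRecOn o A (fun _ ih => cbDeriv ih)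
    (fun o _ ih => ⋂ b : {b : Ordinal // b < o}, ih b.1 b.2)

open Set Filter

/-!
Write `R(B)` (`unseparated B`) for the set of pairs with no point of `B` strictly between them. For closed
`B ⊆ [0,1]`, the squares over the intervals contiguous to `B` together with the diagonal make up
exactly `R(B)`. The transitive closure of `R(B)` consists of the pairs separated by only finitely
many points of `B`, and its closure is `R(B')`: infinitely many points of `B` in a compact
interval accumulate at a point of `B'`. At limit stages compactness gives
`R(⋂ Bᵢ) = closure (⋃ R(Bᵢ))`. Hence `Γ^α(R(A)) = R(A^α)` for every ordinal `α`.

Finally `R(A^α)` is everything iff `A^α ⊆ {0, 1}`. By the Cantor–Bendixson theorem the perfect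
kernel of `A` lies in every `A^α`, so this forces `A` to be countable; conversely, for countable
`A` the derivatives strictly decrease while nonempty and so vanish before `ω₁`.
-/

section Order

variable {X : Type*} [LinearOrder X]

def unseparated (B : Set X) : Set (X × X) :=
  {p | ∀ t ∈ B, t ∉ uIoo p.1 p.2}

lemma diagonal_subset_unseparated (B : Set X) : diagonal X ⊆ unseparated B := by
  rintro ⟨x, y⟩ (rfl : x = y) t _
  simp

lemma unseparated_anti {B B' : Set X} (h : B' ⊆ B) : unseparated B ⊆ unseparated B' :=
  fun _ hp t ht => hp t (h ht)

lemma unseparated_empty : unseparated (∅ : Set X) = univ :=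
  eq_univ_of_forall fun _ _ => False.elim

lemma mem_uIoo_or_mem_uIoo_of_ne {x y z t : X} (ht : t ∈ uIoo x z) (hy : t ≠ y) :
    t ∈ uIoo x y ∨ t ∈ uIoo y z := by
  simp only [uIoo, mem_Ioo, inf_lt_iff, lt_sup_iff] at *
  grind

lemma uIoo_subset_uIoo_left {x y t : X} (ht : t ∈ uIoo x y) : uIoo x t ⊆ uIoo x y := by
  intro s hs
  simp only [uIoo, mem_Ioo, inf_lt_iff, lt_sup_iff] at *
  grind

lemma uIoo_subset_uIoo_right {x y t : X} (ht : t ∈ uIoo x y) : uIoo t y ⊆ uIoo x y := by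
  intro s hs
  simp only [uIoo, mem_Ioo, inf_lt_iff, lt_sup_iff] at *
  grind

lemma finite_inter_uIoo_of_transGen {B : Set X} {x y : X}
    (h : Relation.TransGen (fun u v => (u, v) ∈ unseparated B) x y) :
    (B ∩ uIoo x y).Finite := by
  induction h with
  | single h => exact finite_empty.subset fun t ht => h t ht.1 ht.2
  | @tail y z _ hyz ih =>
    refine (ih.union (finite_singleton y)).subset ?_
    rintro t ⟨htB, ht⟩
    by_cases hty : t = y
    · exact Or.inr hty
    · rcases mem_uIoo_or_mem_uIoo_of_ne ht hty with h | h
      · exact Or.inl ⟨htB, h⟩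
      · exact absurd h (hyz t htB)

lemma transGen_of_finite_inter_uIoo {B : Set X} {x y : X} (h : (B ∩ uIoo x y).Finite) :
    Relation.TransGen (fun u v => (u, v) ∈ unseparated B) x y := by
  suffices ∀ F : Set X, F.Finite → ∀ x y, B ∩ uIoo x y ⊆ F →
      Relation.TransGen (fun u v => (u, v) ∈ unseparated B) x y from
    this _ h x y Subset.rfl
  intro F hF
  induction F, hF using Set.Finite.induction_on with
  | empty => exact fun x y hxy => .single fun t ht ht' => hxy ⟨ht, ht'⟩
  | @insert s F _ _ ih =>
    intro x y hxy
    by_cases hs : s ∈ B ∩ uIoo x y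
    · have hleft : B ∩ uIoo x s ⊆ F := fun t ht =>
        (hxy ⟨ht.1, uIoo_subset_uIoo_left hs.2 ht.2⟩).resolve_left
          (ne_of_mem_of_not_mem ht.2 right_notMem_uIoo)
      have hright : B ∩ uIoo s y ⊆ F := fun t ht =>
        (hxy ⟨ht.1, uIoo_subset_uIoo_right hs.2 ht.2⟩).resolve_left
          (ne_of_mem_of_not_mem ht.2 left_notMem_uIoo)
      exact (ih x s hleft).trans (ih s y hright)
    · exact ih x y fun t ht => (hxy ht).resolve_left fun h => hs (h ▸ ht)

lemma plusSet_unseparated (B : Set X) :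
    plusSet (unseparated B) = {p | (B ∩ uIoo p.1 p.2).Finite} :=
  Set.ext fun _ => ⟨finite_inter_uIoo_of_transGen, transGen_of_finite_inter_uIoo⟩

end Order

section OrderTopology

variable {X : Type*} [LinearOrder X] [TopologicalSpace X] [OrderTopology X]

lemma isClosed_unseparated (B : Set X) : IsClosed (unseparated B) := by
  have h : unseparated B = ⋂ t ∈ B, {p : X × X | p.1 ⊓ p.2 < t ∧ t < p.1 ⊔ p.2}ᶜ := by
    ext; simp [unseparated, uIoo]
  rw [h]
  exact isClosed_biInter fun t _ =>
    ((isOpen_lt (by fun_prop) continuous_const).inter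
      (isOpen_lt continuous_const (by fun_prop))).isClosed_compl

variable [DenselyOrdered X]

lemma mem_closure_of_uIcc_subset_uIoo {S : Set (X × X)} {p : X × X} (hp : p.1 ≠ p.2)
    (hS : ∀ q : X × X, uIcc q.1 q.2 ⊆ uIoo p.1 p.2 → q ∈ S) : p ∈ closure S := by
  obtain ⟨x, y⟩ := p
  wlog hxy : x < y generalizing x y S
  · have h := this y x (S := Prod.swap ⁻¹' S) hp.symm
      (fun q hq => hS q.swap (by rwa [uIcc_comm, uIoo_comm]))
      ((not_lt.1 hxy).lt_of_ne hp.symm)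
    exact map_mem_closure (f := Prod.swap) (t := S) continuous_swap h fun _ hq => hq
  obtain ⟨c, hxc, hcy⟩ := exists_between hxy
  have hsub : Ioo x c ×ˢ Ioo c y ⊆ S := fun q ⟨h1, h2⟩ => hS q <| by
    rw [uIcc_of_le (h1.2.trans h2.1).le, uIoo_of_lt hxy]
    exact Icc_subset_Ioo h1.1 h2.2
  refine closure_mono hsub ?_
  rw [closure_prod_eq, closure_Ioo hxc.ne, closure_Ioo hcy.ne]
  exact ⟨⟨le_rfl, hxc.le⟩, ⟨hcy.le, le_rfl⟩⟩

variable [CompactIccSpace X]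

lemma gammaStep_unseparated {B : Set X} (hB : IsClosed B) :
    GammaStep (unseparated B) = unseparated (derivedSet B) := by
  refine subset_antisymm (closure_minimal (union_subset ?_ (diagonal_subset_unseparated _))
    (isClosed_unseparated _)) fun p hp => ?_
  · rw [plusSet_unseparated]
    intro p hp t ht htp
    exact Set.Infinite.of_accPt (ht.nhds_inter (isOpen_Ioo.mem_nhds htp))
      (hp.subset (inter_comm _ _).subset)
  · rcases eq_or_ne p.1 p.2 with h | h
    · exact subset_closure (Or.inr h)
    refine mem_closure_of_uIcc_subset_uIoo h fun q hq => Or.inl ?_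
    rw [plusSet_unseparated]
    refine Set.Finite.subset ?_ (inter_subset_inter_right B uIoo_subset_uIcc_self)
    by_contra hinf
    obtain ⟨z, hz, hacc⟩ :=
      Set.Infinite.exists_accPt_of_subset_isCompact hinf (isCompact_uIcc.inter_left hB) Subset.rfl
    exact hp z (hacc.mono (principal_mono.2 inter_subset_left)) (hq hz.2)

lemma unseparated_iInter {ι : Type*} [Nonempty ι] {B : ι → Set X}
    (hdir : Directed (· ⊇ ·) B) (hB : ∀ i, IsClosed (B i)) :
    unseparated (⋂ i, B i) = closure (⋃ i, unseparated (B i)) := by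
  refine subset_antisymm (fun p hp => ?_) (closure_minimal
    (iUnion_subset fun i => unseparated_anti (iInter_subset B i)) (isClosed_unseparated _))
  rcases eq_or_ne p.1 p.2 with h | h
  · exact subset_closure <|
      mem_iUnion.2 ⟨Classical.arbitrary ι, diagonal_subset_unseparated _ h⟩
  refine mem_closure_of_uIcc_subset_uIoo h fun q hq => mem_iUnion.2 ?_
  obtain ⟨i, hi⟩ : ∃ i, B i ∩ uIcc q.1 q.2 = ∅ := by
    by_contra! hne
    obtain ⟨z, hz⟩ := IsCompact.nonempty_iInter_of_directed_nonempty_isCompact_isClosed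
      (fun i => B i ∩ uIcc q.1 q.2) (fun i j => let ⟨k, hki, hkj⟩ := hdir i j
        ⟨k, inter_subset_inter_left _ hki, inter_subset_inter_left _ hkj⟩)
      hne (fun i => isCompact_uIcc.inter_left (hB i))
      (fun i => (hB i).inter isClosed_Icc)
    rw [mem_iInter] at hz
    exact hp z (mem_iInter.2 fun i => (hz i).1) (hq (hz (Classical.arbitrary ι)).2)
  exact ⟨i, fun t ht htq => hi.subset ⟨ht, uIoo_subset_uIcc_self htq⟩⟩

end OrderTopology

section Iterates

variable {X : Type*} [TopologicalSpace X]

lemma gammaIter_zero (E : Set (X × X)) : GammaIter E 0 = E :=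
  Ordinal.limitRecOn_zero _ _ _

lemma gammaIter_add_one (E : Set (X × X)) (o : Ordinal.{0}) :
    GammaIter E (o + 1) = GammaStep (GammaIter E o) :=
  Ordinal.limitRecOn_add_one _ _ _ _

lemma gammaIter_limit (E : Set (X × X)) {o : Ordinal.{0}} (ho : Order.IsSuccLimit o) :
    GammaIter E o = closure (⋃ b : {b : Ordinal // b < o}, GammaIter E b.1) :=
  Ordinal.limitRecOn_limit _ _ _ _ ho

lemma cbIter_zero (A : Set X) : CBIter A 0 = A :=
  Ordinal.limitRecOn_zero _ _ _

lemma cbIter_add_one (A : Set X) (o : Ordinal.{0}) :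
    CBIter A (o + 1) = derivedSet (CBIter A o) :=
  Ordinal.limitRecOn_add_one _ _ _ _

lemma cbIter_limit (A : Set X) {o : Ordinal.{0}} (ho : Order.IsSuccLimit o) :
    CBIter A o = ⋂ b : {b : Ordinal // b < o}, CBIter A b.1 :=
  Ordinal.limitRecOn_limit _ _ _ _ ho

lemma isClosed_cbIter [T1Space X] {A : Set X} (hA : IsClosed A) (o : Ordinal.{0}) :
    IsClosed (CBIter A o) := by
  induction o using Ordinal.limitRecOn with
  | zero => rwa [cbIter_zero]
  | add_one o _ => rw [cbIter_add_one]; exact isClosed_derivedSet _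
  | limit o ho ih => rw [cbIter_limit _ ho]; exact isClosed_iInter fun b => ih b.1 b.2

lemma cbIter_antitone [T1Space X] {A : Set X} (hA : IsClosed A) : Antitone (CBIter A) := by
  intro o₁ o₂ h
  induction o₂ using Ordinal.limitRecOn with
  | zero => rw [nonpos_iff_eq_zero.1 h]
  | add_one o ih =>
    rcases h.eq_or_lt with rfl | h
    · rfl
    rw [cbIter_add_one]
    exact ((isClosed_iff_derivedSet_subset _).1 (isClosed_cbIter hA o)).trans
      (ih (Order.lt_add_one_iff.1 h))
  | limit o ho _ =>
    rcases h.eq_or_lt with rfl | h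
    · rfl
    rw [cbIter_limit _ ho]
    exact iInter_subset (fun b : {b : Ordinal // b < o} => CBIter A b.1) ⟨o₁, h⟩

lemma Perfect.subset_cbIter {A D : Set X} (hD : Perfect D) (hDA : D ⊆ A) (o : Ordinal.{0}) :
    D ⊆ CBIter A o := by
  induction o using Ordinal.limitRecOn with
  | zero => rwa [cbIter_zero]
  | add_one o ih =>
    rw [cbIter_add_one]
    exact fun x hx => (hD.acc x hx).mono (principal_mono.2 ih)
  | limit o ho ih => rw [cbIter_limit _ ho]; exact subset_iInter fun b => ih b.1 b.2

lemma cbIter_subset [T1Space X] {A : Set X} (hA : IsClosed A) (o : Ordinal.{0}) :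
    CBIter A o ⊆ A := by
  simpa only [cbIter_zero] using cbIter_antitone hA (zero_le (a := o))

lemma Perfect.not_countable [PolishSpace X] {C : Set X} (hC : Perfect C) (hne : C.Nonempty) :
    ¬C.Countable := by
  let := TopologicalSpace.upgradeIsCompletelyMetrizable X
  obtain ⟨f, hfC, -, hf⟩ := hC.exists_nat_bool_injection hne
  intro hC
  have huniv : (univ : Set (ℕ → Bool)).Countable :=
    MapsTo.countable_of_injOn (fun x _ => hfC (mem_range_self x)) hf.injOn hC
  refine (Cardinal.cantor Cardinal.aleph0).not_ge ?_
  simpa using Cardinal.mk_le_aleph0_iff.2 (countable_univ_iff.1 huniv)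

lemma countable_of_countable_cbIter [PolishSpace X] {A : Set X} (hA : IsClosed A)
    {o : Ordinal.{0}} (h : (CBIter A o).Countable) : A.Countable := by
  obtain ⟨V, D, hV, hD, rfl⟩ := exists_countable_union_perfect_of_isClosed hA
  rcases D.eq_empty_or_nonempty with rfl | hne
  · simpa using hV
  · exact absurd (h.mono (hD.subset_cbIter subset_union_right o)) (hD.not_countable hne)

lemma exists_cbIter_eq_empty [PolishSpace X] {A : Set X} (hA : IsClosed A) (hc : A.Countable) :
    ∃ o : Ordinal.{0}, o.card ≤ Cardinal.aleph0 ∧ CBIter A o = ∅ := by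
  have hdrop : ∀ o, (CBIter A o).Nonempty → ∃ x ∈ CBIter A o, x ∉ CBIter A (o + 1) := by
    intro o hne
    by_contra! h
    rw [cbIter_add_one] at h
    exact (⟨isClosed_cbIter hA o, h⟩ : Perfect _).not_countable hne
      (hc.mono (cbIter_subset hA o))
  -- Otherwise each stage `o < ω₁` drops a point of `A`, injecting `ω₁` into `A`.
  by_contra! hne
  have hω₁ : ∀ o : Iio (Cardinal.aleph 1).ord, (CBIter A o).Nonempty := fun o =>
    hne o (Cardinal.lt_aleph_one_iff.1 (Cardinal.lt_ord.1 o.2))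
  choose x hx hx' using fun o => hdrop _ (hω₁ o)
  have hinj : Function.Injective x := .of_lt_imp_ne fun o₁ o₂ h heq =>
    hx' o₁ (heq ▸ cbIter_antitone hA (Order.add_one_le_of_lt h) (hx o₂))
  have hcount := Cardinal.mk_le_aleph0_iff.2 <| countable_univ_iff.1 <|
    MapsTo.countable_of_injOn (fun o _ => cbIter_subset hA o.1 (hx o)) hinj.injOn hc
  rw [Cardinal.mk_Iio_ordinal, Cardinal.card_ord, Cardinal.lift_le_aleph0] at hcount
  exact Cardinal.aleph0_lt_aleph_one.not_ge hcount

end Iterates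

lemma gammaIter_unseparated {X : Type*} [LinearOrder X] [TopologicalSpace X] [OrderTopology X]
    [DenselyOrdered X] [CompactIccSpace X] {A : Set X} (hA : IsClosed A) (o : Ordinal.{0}) :
    GammaIter (unseparated A) o = unseparated (CBIter A o) := by
  induction o using Ordinal.limitRecOn with
  | zero => rw [gammaIter_zero, cbIter_zero]
  | add_one o ih =>
    rw [gammaIter_add_one, cbIter_add_one, ih, gammaStep_unseparated (isClosed_cbIter hA o)]
  | limit o ho ih =>
    have : Nonempty {b : Ordinal // b < o} := ⟨⟨0, ho.bot_lt⟩⟩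
    have hanti : Antitone fun b : {b : Ordinal // b < o} => CBIter A b.1 :=
      fun _ _ h => cbIter_antitone hA h
    rw [gammaIter_limit _ ho, cbIter_limit _ ho,
      unseparated_iInter hanti.directed_ge fun b => isClosed_cbIter hA b.1]
    exact congrArg closure (iUnion_congr fun b => ih b.1 b.2)

lemma subset_zero_one_of_unseparated_eq_univ {B : Set unitI} (h : unseparated B = univ) :
    B ⊆ {0, 1} := by
  intro t ht
  by_contra hne
  simp only [mem_insert_iff, mem_singleton_iff, not_or] at hne
  have h01 : ((0 : unitI), (1 : unitI)) ∈ unseparated B := h ▸ mem_univ _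
  refine h01 t ht ?_
  rw [uIoo_of_lt zero_lt_one]
  exact ⟨unitInterval.nonneg'.lt_of_ne (Ne.symm hne.1), unitInterval.le_one'.lt_of_ne hne.2⟩

lemma exists_isContig_of_forall_notMem_Ioo {B : Set unitI} (hB : IsClosed B) {u v : unitI}
    (huv : u < v) (h : ∀ t ∈ B, t ∉ Ioo u v) :
    ∃ a b : ℝ, IsContig (Subtype.val '' B) a b ∧ a ≤ u ∧ (v : ℝ) ≤ b := by
  -- `a` is the last point of `B ∪ {0}` up to `u`, `b` the first point of `B ∪ {1}` from `v` on.
  obtain ⟨a, ha, ha_max⟩ :=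
    ((hB.inter isClosed_Iic).isCompact.insert 0).exists_isGreatest (insert_nonempty _ _)
  obtain ⟨b, hb, hb_min⟩ :=
    ((hB.inter isClosed_Ici).isCompact.insert 1).exists_isLeast (insert_nonempty _ _)
  have hau : a ≤ u := by rcases ha with rfl | ha; exacts [unitInterval.nonneg', ha.2]
  have hvb : v ≤ b := by rcases hb with rfl | hb; exacts [unitInterval.le_one', hb.2]
  refine ⟨a, b, ⟨hau.trans_lt (huv.trans_le hvb), Icc_subset_Icc a.2.1 b.2.2, ?_, ?_, ?_⟩,
    hau, hvb⟩
  · refine eq_empty_of_forall_notMem ?_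
    rintro _ ⟨⟨hat, htb⟩, t, ht, rfl⟩
    rcases le_or_gt t u with htu | htu
    · exact (ha_max (Or.inr ⟨ht, htu⟩)).not_gt hat
    rcases le_or_gt v t with hvt | hvt
    · exact (hb_min (Or.inr ⟨ht, hvt⟩)).not_gt htb
    exact h t ht ⟨htu, hvt⟩
  · rcases ha with rfl | ha
    exacts [Or.inr rfl, Or.inl ⟨a, ha.1, rfl⟩]
  · rcases hb with rfl | hb
    exacts [Or.inr rfl, Or.inl ⟨b, hb.1, rfl⟩]

lemma contiguousSquares_eq_unseparated {B : Set unitI} (hB : IsClosed B) :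
    (⋃ (a : ℝ) (b : ℝ) (_ : IsContig (Subtype.val '' B) a b), subIcc a b ×ˢ subIcc a b) ∪
      diagonal unitI = unseparated B := by
  refine subset_antisymm (union_subset ?_ (diagonal_subset_unseparated B)) fun p hp => ?_
  · simp only [iUnion_subset_iff]
    rintro a b hab p ⟨⟨ha₁, hb₁⟩, ⟨ha₂, hb₂⟩⟩ t ht htp
    refine hab.2.2.1.subset ⟨?_, t, ht, rfl⟩
    simp only [uIoo, mem_Ioo, inf_lt_iff, lt_sup_iff, ← Subtype.coe_lt_coe] at htp
    constructor <;> grind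
  · rcases eq_or_ne p.1 p.2 with h | h
    · exact Or.inr h
    obtain ⟨a, b, hab, hau, hvb⟩ := exists_isContig_of_forall_notMem_Ioo hB (inf_lt_sup.2 h) hp
    refine Or.inl (mem_iUnion₂.2 ⟨a, b, mem_iUnion.2 ⟨hab, ?_, ?_⟩⟩)
    · exact ⟨hau.trans (Subtype.coe_le_coe.2 inf_le_left),
        (Subtype.coe_le_coe.2 le_sup_left).trans hvb⟩
    · exact ⟨hau.trans (Subtype.coe_le_coe.2 inf_le_right),
        (Subtype.coe_le_coe.2 le_sup_right).trans hvb⟩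

/-- For `f = ψ(A)`, whose IE-pair set is `⋃_{J ∈ C(A)} (cl J)² ∪ Δ`, one has for every
countable ordinal `α` that `Γ^α(E(I, ψ(A))) = ⋃_{J ∈ C(A^α)} (cl J)² ∪ Δ`, where `A^α` is the
`α`-th Cantor–Bendixson derivative. Consequently, `ψ(A)` has CPE if and only if `A` is
countable. -/
theorem stmt10 (A : Set unitI) (hA : IsCompact A) (f : C(unitI, unitI))
    (hE : {p : unitI × unitI | IEPair ⇑f p} =
      (⋃ (a : ℝ) (b : ℝ) (_ : IsContig (Subtype.val '' A) a b),
        (subIcc a b) ×ˢ (subIcc a b)) ∪ Set.diagonal unitI) :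
    (∀ α : Ordinal.{0}, α.card ≤ Cardinal.aleph0 →
      GammaIter {p : unitI × unitI | IEPair ⇑f p} α =
        (⋃ (a : ℝ) (b : ℝ) (_ : IsContig (Subtype.val '' (CBIter A α)) a b),
          (subIcc a b) ×ˢ (subIcc a b)) ∪ Set.diagonal unitI) ∧
    ((∃ α : Ordinal.{0}, α.card ≤ Cardinal.aleph0 ∧
        GammaIter {p : unitI × unitI | IEPair ⇑f p} α = Set.univ) ↔ A.Countable) := by
  have hAc : IsClosed A := hA.isClosed
  have hGamma (α : Ordinal.{0}) :
      GammaIter {p : unitI × unitI | IEPair ⇑f p} α = unseparated (CBIter A α) := by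
    rw [hE, contiguousSquares_eq_unseparated hAc, gammaIter_unseparated hAc]
  refine ⟨fun α _ => by rw [hGamma, contiguousSquares_eq_unseparated (isClosed_cbIter hAc α)],
    ⟨fun ⟨α, _, hα⟩ => ?_, fun hc => ?_⟩⟩
  · rw [hGamma] at hα
    exact countable_of_countable_cbIter hAc
      ((toFinite _).countable.mono (subset_zero_one_of_unseparated_eq_univ hα))
  · obtain ⟨α, hα, hempty⟩ := exists_cbIter_eq_empty hAc hc
    exact ⟨α, hα, by rw [hGamma, hempty, unseparated_empty]⟩
end

section
/- For a compact metric space X, the set CPE(X) of continuous self-maps with completely positive entropy is a coanalytic (Π¹₁) subset of C(X,X) with the uniform topology. -/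
open MeasureTheory

/-- The topological entropy of a map, via `Dynamics.coverEntropy`. -/
noncomputable def topEntropy {X : Type*} [UniformSpace X] (T : X → X) : EReal :=
  Dynamics.coverEntropy T Set.univ

/-- `(X,T)` has completely positive entropy: every nontrivial topological factor has positive
topological entropy. -/
def HasCPEfactor {X : Type} [MetricSpace X] [CompactSpace X] (T : X → X) : Prop :=
  ∀ (Y : Type) [MetricSpace Y] [CompactSpace Y],
    ∀ (S : Y → Y) (φ : X → Y), Continuous S → Continuous φ → Function.Surjective φ →
      φ ∘ T = S ∘ φ → (∃ y₁ y₂ : Y, y₁ ≠ y₂) → 0 < topEntropy S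

/-!
A factor map `φ : (X, T) → (Y, S)` onto a compact metric space is recorded by the continuous
pseudometric `ρ x y = dist (φ x) (φ y)` on `X`; conversely a continuous pseudometric for which `T`
is uniformly continuous is the pullback of the metric of the metric identification of `(X, ρ)`,
a factor of `(X, T)`. In terms of `ρ`, the factor is nontrivial iff `ρ ≠ 0`, and it has zero
entropy iff at every scale the minimal `ρ`-dynamical covers grow subexponentially. Quantifying
over countably many scales and rates, and letting the `k` centres of a cover range over the
compact space `X^k`, these conditions become Borel in `(T, ρ)` in the Polish space
`C(X, X) × C(X × X, ℝ)`, and the maps without CPE form the projection of a Borel set, an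
analytic set.
-/

open Dynamics Filter Set Function
open scoped ENNReal

section

variable {X Y : Type*}

def IsPseudometric (ρ : X → X → ℝ) : Prop :=
  (∀ x, ρ x x = 0) ∧ (∀ x y, ρ x y = ρ y x) ∧ ∀ x y z, ρ x z ≤ ρ x y + ρ y z

def WithPseudometric (_ : PseudoMetric X ℝ) : Type _ := X

instance (d : PseudoMetric X ℝ) : PseudoMetricSpace (WithPseudometric d) where
  dist := d
  dist_self := d.refl
  dist_comm := d.symm
  dist_triangle := d.triangle

def UniformContinuousWrt (T : X → X) (ρ : X → X → ℝ) : Prop :=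
  ∀ m : ℕ, ∃ k : ℕ, ∀ x y, ρ x y < 1 / (k + 1) → ρ (T x) (T y) ≤ 1 / (m + 1)

def HasDynCoverOfCard (T : X → X) (ρ : X → X → ℝ) (ε : ℝ) (n k : ℕ) : Prop :=
  ∃ c : Fin k → X, ∀ x, ∃ j, ∀ i < n, ρ (T^[i] x) (T^[i] (c j)) ≤ ε

def HasSubexpDynCovers (T : X → X) (ρ : X → X → ℝ) : Prop :=
  ∀ m a : ℕ, ∀ᶠ n : ℕ in atTop, ∃ k : ℕ, (k : ℝ) ≤ Real.exp (n / (a + 1)) ∧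
    HasDynCoverOfCard T ρ (1 / (m + 1)) n k

def CodesZeroEntropyFactor (T : X → X) (ρ : X → X → ℝ) : Prop :=
  IsPseudometric ρ ∧ (∃ x y, ρ x y ≠ 0) ∧ UniformContinuousWrt T ρ ∧ HasSubexpDynCovers T ρ

section Semiconj

variable {T : X → X} {S : Y → Y} {φ : X → Y} (hφ : Surjective φ) (h : Semiconj φ T S)
  (d : Y → Y → ℝ)
include hφ h

lemma uniformContinuousWrt_comp_iff :
    UniformContinuousWrt T (fun x y ↦ d (φ x) (φ y)) ↔ UniformContinuousWrt S d := by
  simp only [UniformContinuousWrt, h.eq, hφ.forall]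

lemma hasDynCoverOfCard_comp_iff {ε : ℝ} {n k : ℕ} :
    HasDynCoverOfCard T (fun x y ↦ d (φ x) (φ y)) ε n k ↔ HasDynCoverOfCard S d ε n k := by
  simp only [HasDynCoverOfCard, (hφ.comp_left (α := Fin k)).exists, hφ.forall, comp_apply,
    (h.iterate_right _).eq]

lemma hasSubexpDynCovers_comp_iff :
    HasSubexpDynCovers T (fun x y ↦ d (φ x) (φ y)) ↔ HasSubexpDynCovers S d := by
  simp only [HasSubexpDynCovers, hasDynCoverOfCard_comp_iff hφ h]

end Semiconj

lemma uniformContinuous_iff_uniformContinuousWrt [PseudoMetricSpace Y] {S : Y → Y} :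
    UniformContinuous S ↔ UniformContinuousWrt S dist := by
  simp [Metric.uniformity_basis_dist_inv_nat_succ.uniformContinuous_iff
    Metric.uniformity_basis_dist_le_inv_nat_succ, UniformContinuousWrt]

lemma ExpGrowth.expGrowthSup_nonpos_iff {u : ℕ → ℝ≥0∞} : expGrowthSup u ≤ 0 ↔
    ∀ a : ℕ, ∀ᶠ n : ℕ in atTop, u n ≤ ENNReal.ofReal (Real.exp (n / (a + 1))) := by
  have hexp (a n : ℕ) :
      EReal.exp ((1 / (a + 1) : ℝ) * n) = ENNReal.ofReal (Real.exp (n / (a + 1))) := by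
    rw [← EReal.coe_coe_eq_natCast, ← EReal.coe_mul, EReal.exp_coe, one_div_mul_eq_div]
  refine ⟨fun h a ↦ ?_, fun h ↦ EReal.le_of_forall_lt_iff_le.1 fun z hz ↦ ?_⟩
  · simpa only [hexp] using
      expGrowthSup_le_iff.1 h ((1 / (a + 1) : ℝ) : EReal) (EReal.coe_pos.2 (by positivity))
  · obtain ⟨a, ha⟩ := exists_nat_one_div_lt (EReal.coe_pos.1 hz)
    refine (_root_.Eventually.expGrowthSup_le ((h a).mono fun n hn ↦ ?_)).trans
      (EReal.coe_le_coe_iff.2 ha.le)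
    rwa [hexp]

lemma ENat.toENNReal_le_ofReal_iff {c : ℕ∞} {r : ℝ} (hr : 0 ≤ r) :
    (c : ℝ≥0∞) ≤ ENNReal.ofReal r ↔ ∃ k : ℕ, (k : ℝ) ≤ r ∧ c ≤ k := by
  refine ⟨fun h ↦ ?_, fun ⟨k, hkr, hck⟩ ↦ ?_⟩
  · lift c to ℕ using by rintro rfl; simp at h
    rw [ENat.toENNReal_coe, ← ENNReal.ofReal_natCast, ENNReal.ofReal_le_ofReal_iff hr] at h
    exact ⟨c, h, le_rfl⟩
  · exact (ENat.toENNReal_le.2 hck).trans (by simpa using ENNReal.ofReal_le_ofReal hkr)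

lemma hasDynCoverOfCard_iff_coverMincard_le [Nonempty X] {T : X → X} {ρ : X → X → ℝ} {ε : ℝ}
    {n k : ℕ} : HasDynCoverOfCard T ρ ε n k ↔ coverMincard T univ {p | ρ p.1 p.2 ≤ ε} n ≤ k := by
  classical
  constructor
  · rintro ⟨c, hc⟩
    have hcover : IsDynCoverOf T univ {p | ρ p.1 p.2 ≤ ε} n (Finset.univ.image c) := by
      intro x _
      obtain ⟨j, hj⟩ := hc x
      exact ⟨c j, by simp, mem_dynEntourage.2 hj⟩
    exact hcover.coverMincard_le_card.trans
      (by exact_mod_cast Finset.card_image_le.trans (by simp))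
  · intro h
    obtain ⟨s, hs, hcard⟩ :=
      (coverMincard_finite_iff _ _ _ _).1 (h.trans_lt (ENat.natCast_lt_top k))
    have hsk : s.card ≤ k := by exact_mod_cast hcard ▸ h
    let c : Fin k → X := fun j ↦
      if hj : (j : ℕ) < s.card then s.equivFin.symm ⟨j, hj⟩ else Classical.arbitrary X
    refine ⟨c, fun x ↦ ?_⟩
    obtain ⟨y, hy, hxy⟩ := hs (mem_univ x)
    refine ⟨Fin.castLE hsk (s.equivFin ⟨y, hy⟩), fun i hi ↦ ?_⟩
    have hcy : c (Fin.castLE hsk (s.equivFin ⟨y, hy⟩)) = y := by simp [c]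
    rw [hcy]
    exact mem_dynEntourage.1 hxy i hi

lemma coverEntropy_nonpos_iff [PseudoMetricSpace Y] [Nonempty Y] (S : Y → Y) :
    coverEntropy S univ ≤ 0 ↔ HasSubexpDynCovers S dist := by
  simp only [coverEntropy_eq_iSup_basis Metric.uniformity_basis_dist_le_inv_nat_succ, iSup_le_iff,
    coverEntropyEntourage, ExpGrowth.expGrowthSup_nonpos_iff, HasSubexpDynCovers,
    hasDynCoverOfCard_iff_coverMincard_le, ENat.toENNReal_le_ofReal_iff (Real.exp_pos _).le,
    forall_const]

lemma topEntropy_nonpos_iff_of_semiconj [PseudoMetricSpace Y] [Nonempty X] {T : X → X}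
    {S : Y → Y} {φ : X → Y} (hφ : Surjective φ) (h : Semiconj φ T S) :
    topEntropy S ≤ 0 ↔ HasSubexpDynCovers T (fun x y ↦ dist (φ x) (φ y)) := by
  have : Nonempty Y := .map φ ‹_›
  rw [topEntropy, coverEntropy_nonpos_iff, hasSubexpDynCovers_comp_iff hφ h]

end

lemma exists_metric_factor {X : Type} [TopologicalSpace X] [CompactSpace X] {T : X → X}
    {ρ : C(X × X, ℝ)} (hρ : IsPseudometric (curry ρ)) (hT : UniformContinuousWrt T (curry ρ)) :
    ∃ (Y : Type) (_ : MetricSpace Y) (_ : CompactSpace Y) (S : Y → Y) (φ : X → Y),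
      Continuous S ∧ Continuous φ ∧ Surjective φ ∧ φ ∘ T = S ∘ φ ∧
        ∀ x y, dist (φ x) (φ y) = ρ (x, y) := by
  let Z := WithPseudometric (⟨curry ρ, hρ.1, hρ.2.1, hρ.2.2⟩ : PseudoMetric X ℝ)
  let TZ : Z → Z := T
  have hTZ : UniformContinuous TZ := uniformContinuous_iff_uniformContinuousWrt.2 hT
  let ι : X → Z := id
  have hι : Continuous ι := continuous_iff_continuous_dist.2 ρ.continuous
  let φ : X → SeparationQuotient Z := SeparationQuotient.mk ∘ ι
  have hφ : Continuous φ := SeparationQuotient.continuous_mk.comp hι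
  have hsurj : Surjective φ := SeparationQuotient.surjective_mk.comp surjective_id
  have : CompactSpace (SeparationQuotient Z) := hsurj.compactSpace hφ
  exact ⟨_, inferInstance, inferInstance, SeparationQuotient.map TZ, φ,
    (SeparationQuotient.uniformContinuous_map _).continuous, hφ, hsurj,
    funext fun x ↦ (SeparationQuotient.map_mk hTZ x).symm, fun _ _ ↦ rfl⟩

theorem not_hasCPEfactor_iff {X : Type} [MetricSpace X] [CompactSpace X] (T : C(X, X)) :
    ¬ HasCPEfactor T ↔ ∃ ρ : C(X × X, ℝ), CodesZeroEntropyFactor T (curry ρ) := by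
  constructor
  · intro h
    simp only [HasCPEfactor, not_forall, not_lt] at h
    obtain ⟨Y, _, _, S, φ, hS, hφ, hsurj, hcomm, ⟨y₁, y₂, hne⟩, hent⟩ := h
    have : Nonempty X := (hsurj y₁).nonempty
    have hsemi : Semiconj φ T S := semiconj_iff_comp_eq.2 hcomm
    refine ⟨⟨fun p ↦ dist (φ p.1) (φ p.2), by fun_prop⟩,
      ⟨fun _ ↦ dist_self _, fun _ _ ↦ dist_comm _ _, fun _ _ _ ↦ dist_triangle _ _ _⟩, ?_, ?_, ?_⟩
    · obtain ⟨x₁, rfl⟩ := hsurj y₁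
      obtain ⟨x₂, rfl⟩ := hsurj y₂
      exact ⟨x₁, x₂, dist_ne_zero.2 hne⟩
    · exact (uniformContinuousWrt_comp_iff hsurj hsemi dist).2
        (uniformContinuous_iff_uniformContinuousWrt.1
          (CompactSpace.uniformContinuous_of_continuous hS))
    · exact (topEntropy_nonpos_iff_of_semiconj hsurj hsemi).1 hent
  · rintro ⟨ρ, hρ, ⟨x₀, y₀, hne⟩, hT, hcov⟩ hcpe
    have : Nonempty X := ⟨x₀⟩
    obtain ⟨Y, _, _, S, φ, hS, hφ, hsurj, hcomm, hdist⟩ := exists_metric_factor hρ hT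
    have hρφ : (fun x y ↦ dist (φ x) (φ y)) = curry ρ := by funext x y; exact hdist x y
    have hpos := hcpe Y S φ hS hφ hsurj hcomm
      ⟨φ x₀, φ y₀, fun h ↦ hne ((hdist x₀ y₀).symm.trans (by rw [h, dist_self]))⟩
    refine hpos.not_ge
      ((topEntropy_nonpos_iff_of_semiconj hsurj (semiconj_iff_comp_eq.2 hcomm)).2 ?_)
    rw [hρφ]
    exact hcov

@[fun_prop]
lemma Continuous.iterate_apply {X Z : Type*} [TopologicalSpace X] [LocallyCompactSpace X]
    [TopologicalSpace Z] {f : Z → C(X, X)} {g : Z → X} (hf : Continuous f) (hg : Continuous g)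
    (i : ℕ) : Continuous fun z ↦ (⇑(f z))^[i] (g z) := by
  induction i with
  | zero => simpa
  | succ i ih => simpa only [iterate_succ_apply'] using hf.eval ih

section Borel

variable (X : Type*) [TopologicalSpace X]

lemma isClosed_setOf_isPseudometric : IsClosed {ρ : C(X × X, ℝ) | IsPseudometric (curry ρ)} := by
  simp only [IsPseudometric, curry_apply, ofPred_and, ofPred_forall]
  exact (isClosed_iInter fun x ↦ isClosed_eq (by fun_prop) (by fun_prop)).inter
    ((isClosed_iInter fun x ↦ isClosed_iInter fun y ↦ isClosed_eq (by fun_prop) (by fun_prop)).inter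
      (isClosed_iInter fun x ↦ isClosed_iInter fun y ↦ isClosed_iInter fun z ↦
        isClosed_le (by fun_prop) (by fun_prop)))

lemma isOpen_setOf_exists_ne_zero : IsOpen {ρ : C(X × X, ℝ) | ∃ x y, ρ (x, y) ≠ 0} := by
  simp only [ofPred_exists]
  exact isOpen_iUnion fun x ↦ isOpen_iUnion fun y ↦ isOpen_ne_fun (by fun_prop) (by fun_prop)

lemma isClosed_setOf_lt_imp_map_le [LocallyCompactSpace X] (δ ε : ℝ) :
    IsClosed {p : C(X, X) × C(X × X, ℝ) | ∀ x y, p.2 (x, y) < δ → p.2 (p.1 x, p.1 y) ≤ ε} := by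
  simp only [imp_iff_not_or, not_lt, ofPred_or, ofPred_forall]
  exact isClosed_iInter fun x ↦ isClosed_iInter fun y ↦
    (isClosed_le (by fun_prop) (by fun_prop)).union (isClosed_le (by fun_prop) (by fun_prop))

lemma isClosed_setOf_hasDynCoverOfCard [LocallyCompactSpace X] [CompactSpace X] (ε : ℝ)
    (n k : ℕ) :
    IsClosed {p : C(X, X) × C(X × X, ℝ) | HasDynCoverOfCard p.1 (curry p.2) ε n k} := by
  have : {p : C(X, X) × C(X × X, ℝ) | HasDynCoverOfCard p.1 (curry p.2) ε n k} =
      Prod.fst '' {q : (C(X, X) × C(X × X, ℝ)) × (Fin k → X) |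
        ∀ x, ∃ j, ∀ i < n, q.1.2 ((⇑q.1.1)^[i] x, (⇑q.1.1)^[i] (q.2 j)) ≤ ε} := by
    ext p
    simp [HasDynCoverOfCard]
  rw [this]
  refine isClosedMap_fst_of_compactSpace _ ?_
  simp only [ofPred_forall, ofPred_exists]
  exact isClosed_iInter fun x ↦ isClosed_iUnion_of_finite fun j ↦ isClosed_iInter fun i ↦
    isClosed_iInter fun _ ↦ isClosed_le (by fun_prop) continuous_const

end Borel

lemma analyticSet_codesZeroEntropyFactor (X : Type*) [MetricSpace X] [CompactSpace X] :
    AnalyticSet {p : C(X, X) × C(X × X, ℝ) | CodesZeroEntropyFactor p.1 (curry p.2)} := by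
  borelize (C(X, X) × C(X × X, ℝ))
  refine MeasurableSet.analyticSet (measurableSet_setOfPred.2 ?_)
  have hρ : Measurable fun p : C(X, X) × C(X × X, ℝ) ↦ IsPseudometric (curry p.2) :=
    measurableSet_setOfPred.1
      ((isClosed_setOf_isPseudometric X).preimage continuous_snd).measurableSet
  have hne : Measurable fun p : C(X, X) × C(X × X, ℝ) ↦ ∃ x y, p.2 (x, y) ≠ 0 :=
    measurableSet_setOfPred.1
      ((isOpen_setOf_exists_ne_zero X).preimage continuous_snd).measurableSet
  have hT (δ ε : ℝ) : Measurable fun p : C(X, X) × C(X × X, ℝ) ↦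
      ∀ x y, p.2 (x, y) < δ → p.2 (p.1 x, p.1 y) ≤ ε :=
    measurableSet_setOfPred.1 (isClosed_setOf_lt_imp_map_le X δ ε).measurableSet
  have hcov (ε : ℝ) (n k : ℕ) : Measurable fun p : C(X, X) × C(X × X, ℝ) ↦
      HasDynCoverOfCard p.1 (curry p.2) ε n k :=
    measurableSet_setOfPred.1 (isClosed_setOf_hasDynCoverOfCard X ε n k).measurableSet
  simp only [CodesZeroEntropyFactor, UniformContinuousWrt, HasSubexpDynCovers, eventually_atTop]
  fun_prop

/-- For a compact metric space `X`, the set `CPE(X)` of continuous self-maps with completely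
positive entropy is a coanalytic (Π¹₁) subset of `C(X,X)` with the uniform topology. -/
theorem stmt13 (X : Type) [MetricSpace X] [CompactSpace X] :
    AnalyticSet ({T : C(X, X) | HasCPEfactor ⇑T}ᶜ) := by
  have h : {T : C(X, X) | HasCPEfactor ⇑T}ᶜ =
      Prod.fst '' {p : C(X, X) × C(X × X, ℝ) | CodesZeroEntropyFactor p.1 (curry p.2)} := by
    ext T
    simp [not_hasCPEfactor_iff]
  rw [h]
  exact (analyticSet_codesZeroEntropyFactor X).image_of_continuous continuous_fst
end
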